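/- arXiv:1909.01883 — 12 statements merged into one kernel-verified Lean document; each statement's English description precedes it below -/
import Mathlib

section
/- Let κ ≥ 1, ν = κ² + 1, and let p_μ(t) = 4(ν−1)t⁶ + 12(ν−2)t⁴ + 4μt³ + 12(ν−3)t² + 12μt + 4ν − μ². Then for μ₊ = 2(κ²−1)/κ one has the identity p_{μ₊}(t) = 4κ⁻²(κt + 1)²(κ(t² + 2)(t − 1)² + (κ − 1)((t⁴ + 3t² + 3)κ + 1)) for all t, and consequently p_{μ₊}(t) ≥ 0 for all t ∈ ℝ. -/
theorem stmt_1 (κ ν : ℝ) (hκ : 1 ≤ κ) (hν : ν = κ^2 + 1) :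
    (∀ t : ℝ, 4*(ν-1)*t^6 + 12*(ν-2)*t^4 + 4*(2*(κ^2-1)/κ)*t^3 + 12*(ν-3)*t^2
        + 12*(2*(κ^2-1)/κ)*t + 4*ν - (2*(κ^2-1)/κ)^2
      = 4*κ⁻¹^2*(κ*t + 1)^2*(κ*(t^2 + 2)*(t - 1)^2 + (κ - 1)*((t^4 + 3*t^2 + 3)*κ + 1))) ∧
    (∀ t : ℝ, 0 ≤ 4*(ν-1)*t^6 + 12*(ν-2)*t^4 + 4*(2*(κ^2-1)/κ)*t^3 + 12*(ν-3)*t^2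
        + 12*(2*(κ^2-1)/κ)*t + 4*ν - (2*(κ^2-1)/κ)^2) := by
  have hκ0 : (0:ℝ) < κ := lt_of_lt_of_le one_pos hκ
  have hne : κ ≠ 0 := ne_of_gt hκ0
  have hid : ∀ t : ℝ, 4*(ν-1)*t^6 + 12*(ν-2)*t^4 + 4*(2*(κ^2-1)/κ)*t^3 + 12*(ν-3)*t^2
        + 12*(2*(κ^2-1)/κ)*t + 4*ν - (2*(κ^2-1)/κ)^2
      = 4*κ⁻¹^2*(κ*t + 1)^2*(κ*(t^2 + 2)*(t - 1)^2 + (κ - 1)*((t^4 + 3*t^2 + 3)*κ + 1)) := by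
    intro t
    subst hν
    field_simp
    ring
  refine ⟨hid, fun t => ?_⟩
  rw [hid t]
  have h1 : (0:ℝ) ≤ κ - 1 := by linarith
  have h2 : (0:ℝ) ≤ κ*(t^2 + 2)*(t - 1)^2 := by positivity
  have h3 : (0:ℝ) ≤ (t^4 + 3*t^2 + 3)*κ + 1 := by positivity
  have := mul_nonneg h1 h3
  positivity
end

section
/- Let κ ≥ 1, ν = κ²+1, μ ∈ ℝ with |μ| ≤ 2(κ²−1)/κ, and let p_μ(t) = 4(ν−1)t⁶ + 12(ν−2)t⁴ + 4μt³ + 12(ν−3)t² + 12μt + 4ν − μ². Then p_μ(t) ≥ 0 for all t ∈ ℝ. -/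
theorem stmt_2 (κ ν μ : ℝ) (hκ : 1 ≤ κ) (hν : ν = κ^2 + 1) (hμ : |μ| ≤ 2*(κ^2-1)/κ) :
    ∀ t : ℝ, 0 ≤ 4*(ν-1)*t^6 + 12*(ν-2)*t^4 + 4*μ*t^3 + 12*(ν-3)*t^2 + 12*μ*t + 4*ν - μ^2 := by
  intro t
  have hκ0 : (0:ℝ) < κ := lt_of_lt_of_le one_pos hκ
  subst hν
  rcases eq_or_lt_of_le hκ with h1 | h1
  · -- κ = 1, so μ = 0
    have hκ1 : κ = 1 := h1.symm
    subst hκ1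
    have hμ0 : μ = 0 := by
      have : |μ| ≤ 0 := by simpa using hμ
      simpa using le_antisymm this (abs_nonneg μ)
    subst hμ0
    nlinarith [mul_nonneg (sq_nonneg (t^2 - 1)) (by positivity : (0:ℝ) ≤ t^2 + 2)]
  · -- κ > 1
    set A : ℝ := 2*(κ^2-1) with hA
    have hA0 : 0 < A := by nlinarith
    have hs : |κ*μ| ≤ A := by
      have h := abs_le.mp hμ
      rw [abs_le]
      have e1 := mul_le_mul_of_nonneg_right h.1 hκ0.le
      have e2 := mul_le_mul_of_nonneg_right h.2 hκ0.le
      have e3 : A / κ * κ = A := div_mul_cancel₀ A (ne_of_gt hκ0)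
      constructor <;> nlinarith [e1, e2, e3]
    have hs1 : -A ≤ κ*μ := (abs_le.mp hs).1
    have hs2 : κ*μ ≤ A := (abs_le.mp hs).2
    -- q⁺, q⁻ nonnegativity
    have hq1 : (0:ℝ) ≤ 4*κ^2*t^4 - 8*κ*t^3 + 12*κ^2*t^2 - 16*κ*t + 12*κ^2 - 4 := by
      nlinarith [sq_nonneg (κ*t^2 - t), mul_nonneg (by nlinarith : (0:ℝ) ≤ 2*κ) (sq_nonneg (t-1)),
        mul_nonneg (by nlinarith : (0:ℝ) ≤ 3*κ^2 - 2*κ - 1) (by positivity : (0:ℝ) ≤ t^2 + 1)]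
    have hq2 : (0:ℝ) ≤ 4*κ^2*t^4 + 8*κ*t^3 + 12*κ^2*t^2 + 16*κ*t + 12*κ^2 - 4 := by
      nlinarith [sq_nonneg (κ*t^2 + t), mul_nonneg (by nlinarith : (0:ℝ) ≤ 2*κ) (sq_nonneg (t+1)),
        mul_nonneg (by nlinarith : (0:ℝ) ≤ 3*κ^2 - 2*κ - 1) (by positivity : (0:ℝ) ≤ t^2 + 1)]
    have hPp : (0:ℝ) ≤ (κ*t + 1)^2 * (4*κ^2*t^4 - 8*κ*t^3 + 12*κ^2*t^2 - 16*κ*t + 12*κ^2 - 4) :=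
      mul_nonneg (sq_nonneg _) hq1
    have hPm : (0:ℝ) ≤ (κ*t - 1)^2 * (4*κ^2*t^4 + 8*κ*t^3 + 12*κ^2*t^2 + 16*κ*t + 12*κ^2 - 4) :=
      mul_nonneg (sq_nonneg _) hq2
    have h3 : (0:ℝ) ≤ (A - κ*μ) * ((κ*t - 1)^2 * (4*κ^2*t^4 + 8*κ*t^3 + 12*κ^2*t^2 + 16*κ*t + 12*κ^2 - 4)) :=
      mul_nonneg (by linarith) hPm
    have h4 : (0:ℝ) ≤ (A + κ*μ) * ((κ*t + 1)^2 * (4*κ^2*t^4 - 8*κ*t^3 + 12*κ^2*t^2 - 16*κ*t + 12*κ^2 - 4)) :=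
      mul_nonneg (by linarith) hPp
    have h5 : (0:ℝ) ≤ 2*A*(A^2 - (κ*μ)^2) := by
      apply mul_nonneg (by linarith)
      nlinarith [abs_nonneg (κ*μ), sq_abs (κ*μ)]
    have hpos : (0:ℝ) < 2*A*κ^2 := by positivity
    have key : 2*A*κ^2 * (4*(κ^2+1-1)*t^6 + 12*(κ^2+1-2)*t^4 + 4*μ*t^3 + 12*(κ^2+1-3)*t^2 + 12*μ*t + 4*(κ^2+1) - μ^2)
        = (A - κ*μ) * ((κ*t - 1)^2 * (4*κ^2*t^4 + 8*κ*t^3 + 12*κ^2*t^2 + 16*κ*t + 12*κ^2 - 4))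
          + (A + κ*μ) * ((κ*t + 1)^2 * (4*κ^2*t^4 - 8*κ*t^3 + 12*κ^2*t^2 - 16*κ*t + 12*κ^2 - 4))
          + 2*A*(A^2 - (κ*μ)^2) := by
      simp only [hA]; ring
    by_contra hcon
    push_neg at hcon
    have hneg : 2*A*κ^2 * (4*(κ^2+1-1)*t^6 + 12*(κ^2+1-2)*t^4 + 4*μ*t^3 + 12*(κ^2+1-3)*t^2 + 12*μ*t + 4*(κ^2+1) - μ^2) < 0 :=
      mul_neg_of_pos_of_neg hpos hcon
    linarith [key, h3, h4, h5, hneg]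
end

section
/- Let D ⊂ ℝⁿ be an open convex set and q : D → ℝ a C² function. Suppose there exists a map w : D → ℝⁿ such that for every x ∈ D the symmetric matrix q''(x) − q'(x)·w(x)ᵀ − w(x)·q'(x)ᵀ is positive definite. Then q is quasi-convex, i.e. q(λx + (1−λ)y) ≤ max(q(x), q(y)) for all x, y ∈ D and λ ∈ [0,1]. -/
/-!
Along a segment `t ↦ y + t • h` the function `g t = q (y + t • h)` has `g' t = q' h` and
`g'' t = q'' (h, h)`. At a critical point of `g` the rank-one terms of the hypothesis vanish, so
`g'' > 0` there and `g` has no interior local maximum. A continuous function on `[0, 1]` attains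
its maximum, which must therefore sit at an endpoint.
-/

open Set Filter Topology

-- A local maximum would also be a local minimum by the second-derivative test, so `f` would be
-- locally constant and `deriv (deriv f) x₀ = 0`.
theorem not_isLocalMax_of_deriv_deriv_pos {f : ℝ → ℝ} {x₀ : ℝ} (hf : 0 < deriv (deriv f) x₀)
    (hc : ContinuousAt f x₀) : ¬ IsLocalMax f x₀ := by
  intro hmax
  have hmin := isLocalMin_of_deriv_deriv_pos hf hmax.deriv_eq_zero hc
  have hconst : f =ᶠ[𝓝 x₀] fun _ => f x₀ := by
    filter_upwards [hmax, hmin] with x h₁ h₂ using le_antisymm h₁ h₂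
  have hderiv : deriv f =ᶠ[𝓝 x₀] fun _ => 0 := by
    filter_upwards [hconst.eventuallyEq_nhds] with x hx
    rw [hx.deriv_eq, deriv_const]
  rw [hderiv.deriv_eq, deriv_const] at hf
  exact lt_irrefl 0 hf

theorem le_max_of_forall_not_isLocalMax {f : ℝ → ℝ} {a b : ℝ} (hab : a ≤ b)
    (hf : ContinuousOn f (Icc a b)) (hmax : ∀ t ∈ Ioo a b, ¬ IsLocalMax f t) {t : ℝ}
    (ht : t ∈ Icc a b) : f t ≤ max (f a) (f b) := by
  obtain ⟨t₀, ht₀, hmax₀⟩ := isCompact_Icc.exists_isMaxOn (nonempty_Icc.mpr hab) hf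
  by_cases hint : t₀ ∈ Ioo a b
  · exact absurd (hmax₀.isLocalMax (Icc_mem_nhds hint.1 hint.2)) (hmax t₀ hint)
  · have hend : t₀ ∈ ({a, b} : Set ℝ) := Icc_sdiff_Ioo_same hab ▸ ⟨ht₀, hint⟩
    calc f t ≤ f t₀ := hmax₀ ht
      _ ≤ max (f a) (f b) := by rcases hend with rfl | rfl <;> simp

section Segment

variable {E : Type*} [NormedAddCommGroup E] [NormedSpace ℝ E]

theorem hasDerivAt_comp_add_smul {F : Type*} [NormedAddCommGroup F] [NormedSpace ℝ F]
    {q : E → F} {y h : E} {t : ℝ} (hq : DifferentiableAt ℝ q (y + t • h)) :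
    HasDerivAt (fun s : ℝ => q (y + s • h)) (fderiv ℝ q (y + t • h) h) t := by
  have hline : HasDerivAt (fun s : ℝ => y + s • h) h t := by
    simpa using ((hasDerivAt_id t).smul_const h).const_add y
  exact hq.hasFDerivAt.comp_hasDerivAt t hline

variable {q : E → ℝ} {D : Set E}

theorem deriv_deriv_comp_add_smul (hD : IsOpen D) (hq : ContDiffOn ℝ 2 q D) {y h : E} {t : ℝ}
    (ht : y + t • h ∈ D) :
    deriv (deriv fun s => q (y + s • h)) t = iteratedFDeriv ℝ 2 q (y + t • h) (fun _ => h) := by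
  have hnear : ∀ᶠ s in 𝓝 t, y + s • h ∈ D :=
    (show Continuous fun s : ℝ => y + s • h by fun_prop).continuousAt.preimage_mem_nhds
      (hD.mem_nhds ht)
  have hderiv : deriv (fun s => q (y + s • h)) =ᶠ[𝓝 t] fun s => fderiv ℝ q (y + s • h) h := by
    filter_upwards [hnear] with s hs
    exact (hasDerivAt_comp_add_smul
      ((hq.differentiableOn (by norm_num)).differentiableAt (hD.mem_nhds hs))).deriv
  have hq' : DifferentiableAt ℝ (fderiv ℝ q) (y + t • h) :=
    ((hq.fderiv_of_isOpen hD (by norm_num)).differentiableOn one_ne_zero).differentiableAt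
      (hD.mem_nhds ht)
  rw [hderiv.deriv_eq, iteratedFDeriv_two_apply]
  exact ((ContinuousLinearMap.apply ℝ ℝ h).hasFDerivAt.comp_hasDerivAt t
    (hasDerivAt_comp_add_smul hq')).deriv

theorem not_isLocalMax_comp_add_smul (hD : IsOpen D) (hq : ContDiffOn ℝ 2 q D)
    (hpos : ∀ x ∈ D, ∀ h : E, h ≠ 0 → fderiv ℝ q x h = 0 →
      0 < iteratedFDeriv ℝ 2 q x (fun _ => h))
    {y h : E} (hh : h ≠ 0) {t : ℝ} (ht : y + t • h ∈ D) :
    ¬ IsLocalMax (fun s => q (y + s • h)) t := by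
  intro hmax
  have hg := hasDerivAt_comp_add_smul
    ((hq.differentiableOn (by norm_num)).differentiableAt (hD.mem_nhds ht))
  have hcrit : fderiv ℝ q (y + t • h) h = 0 := hg.deriv ▸ hmax.deriv_eq_zero
  refine not_isLocalMax_of_deriv_deriv_pos ?_ hg.continuousAt hmax
  rw [deriv_deriv_comp_add_smul hD hq ht]
  exact hpos _ ht h hh hcrit

theorem quasiconvexOn_of_iteratedFDeriv_pos_on_ker_fderiv (hD : IsOpen D) (hDconv : Convex ℝ D)
    (hq : ContDiffOn ℝ 2 q D)
    (hpos : ∀ x ∈ D, ∀ h : E, h ≠ 0 → fderiv ℝ q x h = 0 →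
      0 < iteratedFDeriv ℝ 2 q x (fun _ => h)) :
    QuasiconvexOn ℝ D q := by
  refine quasiconvexOn_iff_le_max.mpr ⟨hDconv, fun x hx y hy a b ha hb hab => ?_⟩
  obtain rfl | hxy := eq_or_ne x y
  · rw [Convex.combo_self hab]
    exact le_max_left _ _
  obtain rfl : b = 1 - a := eq_sub_of_add_eq' hab
  have hseg : MapsTo (fun t : ℝ => y + t • (x - y)) (Icc 0 1) D := fun t ht => by
    convert hDconv hx hy ht.1 (sub_nonneg.2 ht.2) (add_sub_cancel _ _) using 1
    module
  have key := le_max_of_forall_not_isLocalMax zero_le_one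
    (hq.continuousOn.comp (by fun_prop) hseg)
    (fun t ht => not_isLocalMax_comp_add_smul hD hq hpos (sub_ne_zero.2 hxy)
      (hseg (Ioo_subset_Icc_self ht)))
    ⟨ha, sub_nonneg.1 hb⟩
  simp only [Function.comp_apply, zero_smul, add_zero, one_smul, add_sub_cancel,
    max_comm (q y)] at key
  convert key using 2
  congr 1
  module

end Segment

theorem stmt_5 {n : ℕ} (D : Set (EuclideanSpace ℝ (Fin n))) (hD : IsOpen D)
    (hDconv : Convex ℝ D) (q : EuclideanSpace ℝ (Fin n) → ℝ)
    (hq : ContDiffOn ℝ 2 q D)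
    (w : EuclideanSpace ℝ (Fin n) → EuclideanSpace ℝ (Fin n))
    (hpos : ∀ x ∈ D, ∀ h : EuclideanSpace ℝ (Fin n), h ≠ 0 →
      0 < iteratedFDeriv ℝ 2 q x (fun _ => h) - 2 * fderiv ℝ q x h * inner ℝ (w x) h) :
    ∀ x ∈ D, ∀ y ∈ D, ∀ lam : ℝ, lam ∈ Set.Icc (0:ℝ) 1 →
      q (lam • x + (1 - lam) • y) ≤ max (q x) (q y) := by
  intro x hx y hy lam hlam
  have hker : ∀ x ∈ D, ∀ h, h ≠ 0 → fderiv ℝ q x h = 0 →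
      0 < iteratedFDeriv ℝ 2 q x (fun _ => h) := fun x hx h hh hcrit => by
    simpa [hcrit] using hpos x hx h hh
  exact (quasiconvexOn_iff_le_max.mp
    (quasiconvexOn_of_iteratedFDeriv_pos_on_ker_fderiv hD hDconv hq hker)).2
    hx hy hlam.1 (sub_nonneg.2 hlam.2) (add_sub_cancel _ _)
end

section
/- Let g₀ > 0, p₀ ∈ ℝ, γ ≥ 0, and s₀ = g₀² + p₀². Define p₊(t) = (p₀ + t(g₀² − p₀² − γg₀p₀)) / (−g₀²t² + (p₀t − 1)² + γg₀t(p₀t − 1)) on the maximal interval around 0 where the denominator is positive. Then p₊(0) = p₀, p₊'(0) = s₀, and p₊ satisfies the differential equation p'' = 6p'p − 4p³ + 2γ(p' − p²)^{3/2} on its domain, with p₊' − p₊² > 0 there. -/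
/-!
Write `p = N / D` with `N t = p₀ + c t` linear and `D = den` quadratic. Since `D'' = -2 N'`, the
Wronskian-type expression `N' D - N D' - N²` is constant, equal to its value `g₀²` at `0`; hence
`p' = p² + g₀² / D²`, so `p' - p² = (g₀ / D)²` is positive. Differentiating once more and using
`D' = -γ g₀ - 2 N` gives `p'' = 6 p' p - 4 p³ + 2 γ g₀³ / D³`, and `g₀³ / D³ = (p' - p²)^(3/2)`.
-/

section LinearOverQuadratic

variable {a b B t : ℝ}

noncomputable def quadDen (b B t : ℝ) : ℝ := 1 + B * t - b * t ^ 2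

noncomputable def linQuadRatio (a b B t : ℝ) : ℝ := (a + b * t) / quadDen b B t

lemma hasDerivAt_quadDen (b B t : ℝ) : HasDerivAt (quadDen b B) (B - 2 * b * t) t := by
  refine ((((hasDerivAt_id' t).const_mul B).const_add 1).sub
    ((hasDerivAt_pow 2 t).const_mul b)).congr_deriv ?_
  push_cast; ring

lemma continuous_quadDen (b B : ℝ) : Continuous (quadDen b B) := by
  unfold quadDen; fun_prop

lemma linQuadRatio_zero (a b B : ℝ) : linQuadRatio a b B 0 = a := by
  simp [linQuadRatio, quadDen]

lemma quadDen_wronskian (a b B t : ℝ) :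
    b * quadDen b B t - (a + b * t) * (B - 2 * b * t) - (a + b * t) ^ 2 = b - a * B - a ^ 2 := by
  unfold quadDen; ring

lemma hasDerivAt_linQuadRatio (ht : quadDen b B t ≠ 0) :
    HasDerivAt (linQuadRatio a b B)
      (linQuadRatio a b B t ^ 2 + (b - a * B - a ^ 2) / quadDen b B t ^ 2) t := by
  have hnum : HasDerivAt (fun s => a + b * s) b t := by
    simpa using ((hasDerivAt_id t).const_mul b).const_add a
  refine (hnum.div (hasDerivAt_quadDen b B t) ht).congr_deriv ?_
  rw [linQuadRatio, ← quadDen_wronskian a b B t]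
  field_simp
  ring

lemma deriv_linQuadRatio_eventuallyEq (ht : quadDen b B t ≠ 0) :
    deriv (linQuadRatio a b B) =ᶠ[nhds t]
      fun s => linQuadRatio a b B s ^ 2 + (b - a * B - a ^ 2) / quadDen b B s ^ 2 := by
  filter_upwards [(continuous_quadDen b B).isOpen_preimage _ isOpen_ne |>.mem_nhds ht] with s hs
  exact (hasDerivAt_linQuadRatio hs).deriv

lemma hasDerivAt_deriv_linQuadRatio (ht : quadDen b B t ≠ 0) :
    HasDerivAt (deriv (linQuadRatio a b B))
      (6 * deriv (linQuadRatio a b B) t * linQuadRatio a b B t - 4 * linQuadRatio a b B t ^ 3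
        - 2 * (b - a * B - a ^ 2) * (B + 2 * a) / quadDen b B t ^ 3) t := by
  have hp := hasDerivAt_linQuadRatio (a := a) ht
  have h := (hp.pow 2).add ((hasDerivAt_const t (b - a * B - a ^ 2)).div
    ((hasDerivAt_quadDen b B t).pow 2) (pow_ne_zero 2 ht))
  rw [hp.deriv]
  refine (h.congr_of_eventuallyEq (deriv_linQuadRatio_eventuallyEq ht)).congr_deriv ?_
  have hnum : a + b * t = linQuadRatio a b B t * quadDen b B t := (div_mul_cancel₀ _ ht).symm
  have hden' : B - 2 * b * t = (B + 2 * a) - 2 * (a + b * t) := by ring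
  simp only [Pi.pow_apply, hden', hnum]
  generalize linQuadRatio a b B t = p, quadDen b B t = D at ht ⊢
  field_simp
  ring

end LinearOverQuadratic

lemma sq_rpow_three_halves {x : ℝ} (hx : 0 ≤ x) : (x ^ 2) ^ ((3 : ℝ) / 2) = x ^ 3 := by
  rw [← Real.rpow_natCast x 2, ← Real.rpow_mul hx]
  norm_num

theorem stmt_6_general (g₀ p₀ γ : ℝ) (hg : 0 < g₀)
    (s₀ : ℝ) (hs : s₀ = g₀^2 + p₀^2)
    (den : ℝ → ℝ)
    (hden : den = fun t => -g₀^2*t^2 + (p₀*t - 1)^2 + γ*g₀*t*(p₀*t - 1))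
    (p : ℝ → ℝ)
    (hp : p = fun t => (p₀ + t*(g₀^2 - p₀^2 - γ*g₀*p₀)) / den t)
    -- I is the maximal interval around 0 on which the denominator is positive
    (I : Set ℝ) (hI : I = {t : ℝ | ∀ s ∈ Set.uIcc 0 t, 0 < den s}) :
    p 0 = p₀ ∧ deriv p 0 = s₀ ∧
    ∀ t ∈ I,
      deriv (deriv p) t
        = 6 * deriv p t * p t - 4 * (p t)^3 + 2*γ*(deriv p t - (p t)^2) ^ ((3:ℝ)/2) ∧
      0 < deriv p t - (p t)^2 := by
  set b := g₀^2 - p₀^2 - γ*g₀*p₀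
  set B := -2*p₀ - γ*g₀
  have hden_eq : den = quadDen b B := by
    rw [hden]; funext t; simp only [quadDen, b, B]; ring
  have hp_eq : p = linQuadRatio p₀ b B := by
    rw [hp, hden_eq]; funext t; simp only [linQuadRatio]; ring_nf
  have hk : b - p₀ * B - p₀ ^ 2 = g₀ ^ 2 := by ring
  have he : B + 2 * p₀ = -(γ * g₀) := by ring
  subst hp_eq
  refine ⟨linQuadRatio_zero .., ?_, fun t ht => ?_⟩
  · have h0 : quadDen b B 0 = 1 := by simp [quadDen]
    rw [(hasDerivAt_linQuadRatio (h0 ▸ one_ne_zero)).deriv, linQuadRatio_zero, hk, h0, hs]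
    ring
  have hDt : 0 < quadDen b B t := hden_eq ▸ (hI ▸ ht) t Set.right_mem_uIcc
  have hgap : deriv (linQuadRatio p₀ b B) t - linQuadRatio p₀ b B t ^ 2
      = (g₀ / quadDen b B t) ^ 2 := by
    rw [(hasDerivAt_linQuadRatio hDt.ne').deriv, hk, div_pow]; ring
  refine ⟨?_, hgap ▸ by positivity⟩
  rw [(hasDerivAt_deriv_linQuadRatio hDt.ne').deriv, hgap,
    sq_rpow_three_halves (div_pos hg hDt).le, hk, he]
  ring

theorem stmt_6 (g₀ p₀ γ : ℝ) (hg : 0 < g₀) (hγ : 0 ≤ γ)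
    (s₀ : ℝ) (hs : s₀ = g₀^2 + p₀^2)
    (den : ℝ → ℝ)
    (hden : den = fun t => -g₀^2*t^2 + (p₀*t - 1)^2 + γ*g₀*t*(p₀*t - 1))
    (p : ℝ → ℝ)
    (hp : p = fun t => (p₀ + t*(g₀^2 - p₀^2 - γ*g₀*p₀)) / den t)
    -- I is the maximal interval around 0 on which the denominator is positive
    (I : Set ℝ) (hI : I = {t : ℝ | ∀ s ∈ Set.uIcc 0 t, 0 < den s}) :
    p 0 = p₀ ∧ deriv p 0 = s₀ ∧
    ∀ t ∈ I,
      deriv (deriv p) t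
        = 6 * deriv p t * p t - 4 * (p t)^3 + 2*γ*(deriv p t - (p t)^2) ^ ((3:ℝ)/2) ∧
      0 < deriv p t - (p t)^2 :=
  stmt_6_general g₀ p₀ γ hg s₀ hs den hden p hp I hI
end

section
/- Let ν ≥ 2, p₀ ∈ ℝ, g₀ > 0, x₀ ∈ ℝ, f₀ ∈ ℝ. Define f₊(x) = −((ν−1)/ν) log(1 − (x−x₀)(p₀ − g₀/√(ν−1))) − (1/ν) log(1 − (x−x₀)(p₀ + g₀√(ν−1))) + f₀ on the open set where both logarithm arguments are positive. Then f₊(x₀) = f₀, f₊'(x₀) = p₀, f₊''(x₀) = p₀² + g₀², and f₊ satisfies f₊'''(x) − 6f₊''(x)f₊'(x) + 4(f₊'(x))³ = 2γ(f₊''(x) − (f₊'(x))²)^{3/2} with γ = (ν−2)/√(ν−1), and f₊''(x) − (f₊'(x))² > 0, on its domain. -/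
/-!
Write `A = 1 - (x - x₀) a`, `B = 1 - (x - x₀) b` with `a = p₀ - g₀/√(ν-1)`, `b = p₀ + g₀√(ν-1)`.
Then `f₊ = w (-log A) + (1 - w) (-log B) + f₀` with `w = (ν-1)/ν`, and the `k`-th derivative of
`f₊` is `(k-1)! (w u^k + (1-w) v^k)` with `u = a/A`, `v = b/B`: these are the moments of the
two-point law giving mass `w` to `u` and `1 - w` to `v`. So `f₊'' - f₊'²` is its variance
`w(1-w)(v-u)²` and the left side of the ODE is twice its third central moment
`w(1-w)(1-2w)(u-v)³`. Since `v - u = (b - a)/(AB) > 0`, both are powers of `g₀/(AB)`, and the ratio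
`(2w-1)/√(w(1-w))` is exactly `γ`.
-/

open Real Set

noncomputable section

namespace LogBarrierMixture

variable (a b x₀ α β c : ℝ)

def rate (x : ℝ) : ℝ := a / (1 - (x - x₀) * a)

def moment (k : ℕ) (x : ℝ) : ℝ := α * rate a x₀ x ^ k + β * rate b x₀ x ^ k

def mixture (x : ℝ) : ℝ :=
  α * -log (1 - (x - x₀) * a) + β * -log (1 - (x - x₀) * b) + c

def domain : Set ℝ := {x | 0 < 1 - (x - x₀) * a ∧ 0 < 1 - (x - x₀) * b}

lemma isOpen_domain : IsOpen (domain a b x₀) :=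
  (isOpen_lt continuous_const (by fun_prop : Continuous fun x => 1 - (x - x₀) * a)).inter
    (isOpen_lt continuous_const (by fun_prop : Continuous fun x => 1 - (x - x₀) * b))

variable {a b x₀ α β c}

lemma rate_self : rate a x₀ x₀ = a := by simp [rate]

lemma hasDerivAt_neg_log {x : ℝ} (h : 1 - (x - x₀) * a ≠ 0) :
    HasDerivAt (fun y => -log (1 - (y - x₀) * a)) (rate a x₀ x) x := by
  have := ((((hasDerivAt_id x).sub_const x₀).mul_const a).const_sub 1).log h |>.neg
  refine this.congr_deriv ?_
  simp only [rate, id]; ring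

lemma hasDerivAt_rate_pow {x : ℝ} (h : 1 - (x - x₀) * a ≠ 0) (k : ℕ) :
    HasDerivAt (fun y => rate a x₀ y ^ k) (k * rate a x₀ x ^ (k + 1)) x := by
  have hrate : HasDerivAt (rate a x₀) (rate a x₀ x ^ 2) x := by
    have := (hasDerivAt_const x a).div
      ((((hasDerivAt_id x).sub_const x₀).mul_const a).const_sub 1) h
    refine this.congr_deriv ?_
    simp only [rate, id, div_pow]; ring
  refine (hrate.fun_pow k).congr_deriv ?_
  rcases k with _ | k
  · simp
  · simp only [Nat.add_sub_cancel]; ring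

lemma hasDerivAt_moment {x : ℝ} (ha : 1 - (x - x₀) * a ≠ 0) (hb : 1 - (x - x₀) * b ≠ 0)
    (k : ℕ) : HasDerivAt (moment a b x₀ α β k) (k * moment a b x₀ α β (k + 1) x) x := by
  refine (((hasDerivAt_rate_pow ha k).const_mul α).add
    ((hasDerivAt_rate_pow hb k).const_mul β)).congr_deriv ?_
  simp only [moment]; ring

lemma hasDerivAt_mixture {x : ℝ} (ha : 1 - (x - x₀) * a ≠ 0) (hb : 1 - (x - x₀) * b ≠ 0) :
    HasDerivAt (mixture a b x₀ α β c) (moment a b x₀ α β 1 x) x := by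
  refine ((((hasDerivAt_neg_log ha).const_mul α).add
    ((hasDerivAt_neg_log hb).const_mul β)).add_const c).congr_deriv ?_
  simp only [moment, pow_one]

lemma deriv_mixture_eqOn :
    EqOn (deriv (mixture a b x₀ α β c)) (moment a b x₀ α β 1) (domain a b x₀) :=
  fun _ hx => (hasDerivAt_mixture hx.1.ne' hx.2.ne').deriv

lemma deriv_deriv_mixture_eqOn :
    EqOn (deriv (deriv (mixture a b x₀ α β c))) (moment a b x₀ α β 2) (domain a b x₀) :=
  fun x hx => by
    rw [deriv_mixture_eqOn.deriv (isOpen_domain a b x₀) hx,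
      (hasDerivAt_moment hx.1.ne' hx.2.ne' 1).deriv]
    simp

lemma deriv_deriv_deriv_mixture_eqOn :
    EqOn (deriv (deriv (deriv (mixture a b x₀ α β c))))
      (fun x => 2 * moment a b x₀ α β 3 x) (domain a b x₀) :=
  fun x hx => by
    rw [deriv_deriv_mixture_eqOn.deriv (isOpen_domain a b x₀) hx,
      (hasDerivAt_moment hx.1.ne' hx.2.ne' 2).deriv]
    norm_num

lemma rate_sub_rate {x : ℝ} (ha : 1 - (x - x₀) * a ≠ 0) (hb : 1 - (x - x₀) * b ≠ 0) :
    rate b x₀ x - rate a x₀ x = (b - a) / ((1 - (x - x₀) * a) * (1 - (x - x₀) * b)) := by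
  rw [rate, rate, div_sub_div _ _ hb ha]
  congr 1 <;> ring

variable (hαβ : α + β = 1) (x : ℝ)
include hαβ

lemma moment_two_sub_sq :
    moment a b x₀ α β 2 x - moment a b x₀ α β 1 x ^ 2
      = α * β * (rate b x₀ x - rate a x₀ x) ^ 2 := by
  obtain rfl : β = 1 - α := by linarith
  simp only [moment]; ring

lemma two_mul_moment_three_sub :
    2 * moment a b x₀ α β 3 x - 6 * moment a b x₀ α β 2 x * moment a b x₀ α β 1 x
        + 4 * moment a b x₀ α β 1 x ^ 3
      = 2 * (α * β * (α - β)) * (rate b x₀ x - rate a x₀ x) ^ 3 := by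
  obtain rfl : β = 1 - α := by linarith
  simp only [moment]; ring

end LogBarrierMixture

end

open LogBarrierMixture in
theorem stmt_7 (ν p₀ g₀ x₀ f₀ : ℝ) (hν : 2 ≤ ν) (hg : 0 < g₀)
    (γ : ℝ) (hγ : γ = (ν - 2)/Real.sqrt (ν - 1))
    (f : ℝ → ℝ)
    (hf : f = fun x => -((ν-1)/ν) * Real.log (1 - (x - x₀)*(p₀ - g₀/Real.sqrt (ν-1)))
        - (1/ν) * Real.log (1 - (x - x₀)*(p₀ + g₀*Real.sqrt (ν-1))) + f₀)
    (I : Set ℝ)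
    (hI : I = {x : ℝ | 0 < 1 - (x - x₀)*(p₀ - g₀/Real.sqrt (ν-1)) ∧
                       0 < 1 - (x - x₀)*(p₀ + g₀*Real.sqrt (ν-1))}) :
    f x₀ = f₀ ∧ deriv f x₀ = p₀ ∧ deriv (deriv f) x₀ = p₀^2 + g₀^2 ∧
    ∀ x ∈ I,
      deriv (deriv (deriv f)) x - 6 * deriv (deriv f) x * deriv f x + 4 * (deriv f x)^3
        = 2*γ*(deriv (deriv f) x - (deriv f x)^2) ^ ((3:ℝ)/2) ∧
      0 < deriv (deriv f) x - (deriv f x)^2 := by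
  obtain ⟨s, hs, hs_eq, rfl⟩ : ∃ s, 0 < s ∧ √(ν - 1) = s ∧ ν = s ^ 2 + 1 :=
    ⟨_, sqrt_pos.2 (by linarith), rfl, by rw [sq_sqrt (by linarith)]; ring⟩
  rw [hs_eq] at hγ hf hI
  have hs₀ : s ≠ 0 := hs.ne'
  set a := p₀ - g₀ / s
  set b := p₀ + g₀ * s
  have hf' : f = mixture a b x₀ (s ^ 2 / (s ^ 2 + 1)) (1 / (s ^ 2 + 1)) f₀ := by
    rw [hf]; funext y; simp only [mixture]; ring
  have hαβ : s ^ 2 / (s ^ 2 + 1) + 1 / (s ^ 2 + 1) = 1 := by field_simp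
  have h1 := hf' ▸ deriv_mixture_eqOn (a := a) (b := b) (x₀ := x₀)
  have h2 := hf' ▸ deriv_deriv_mixture_eqOn (a := a) (b := b) (x₀ := x₀)
  have h3 := hf' ▸ deriv_deriv_deriv_mixture_eqOn (a := a) (b := b) (x₀ := x₀)
  have hx₀ : x₀ ∈ domain a b x₀ := by simp [domain]
  refine ⟨by simp [hf', mixture], ?_, ?_, fun x hx => ?_⟩
  · rw [h1 hx₀]; simp only [moment, rate_self, a, b]; field_simp; ring
  · rw [h2 hx₀]; simp only [moment, rate_self, a, b]; field_simp; ring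
  rw [hI] at hx
  have hAB : 0 < (1 - (x - x₀) * a) * (1 - (x - x₀) * b) := mul_pos hx.1 hx.2
  set σ := g₀ / ((1 - (x - x₀) * a) * (1 - (x - x₀) * b))
  have hσ : 0 < σ := by positivity
  have hdiff : rate b x₀ x - rate a x₀ x = (s ^ 2 + 1) / s * σ := by
    rw [rate_sub_rate hx.1.ne' hx.2.ne']; simp only [σ, a, b]; field_simp; ring
  have hvar : deriv (deriv f) x - deriv f x ^ 2 = σ ^ 2 := by
    rw [h1 hx, h2 hx, moment_two_sub_sq hαβ, hdiff]; field_simp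
  refine ⟨?_, by rw [hvar]; positivity⟩
  have hpow : (σ ^ 2) ^ ((3 : ℝ) / 2) = σ ^ 3 := by
    rw [← rpow_natCast, ← rpow_mul hσ.le]; norm_num
  rw [hvar, hpow, h1 hx, h2 hx, h3 hx, two_mul_moment_three_sub hαβ, hdiff, hγ]
  field_simp; ring
end

section
/- Let X ⊂ ℝⁿ be a regular convex set, f a projectively self-concordant barrier on X with negative curvature, and suppose for all x ∈ int X and h ∈ ℝⁿ the inequality C(x)[h,h,h] ≤ 2·((ω_x(h)² − 1)/ω_x(h))·(G(x)[h,h])^{3/2} holds, where ω_x(h) = (σ_x(h) − f'(x)[h])/√(G(x)[h,h]). Then for fixed x and h, the function t ↦ ω_{x+th}(h) is non-decreasing on the interval where x + th ∈ int X. -/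
open Filter

variable {E : Type*} [NormedAddCommGroup E] [NormedSpace ℝ E]

/-- A regular convex set: closed, convex, with nonempty interior, containing no lines. -/
def IsRegularConvex (X : Set E) : Prop :=
  IsClosed X ∧ Convex ℝ X ∧ (interior X).Nonempty ∧
    ∀ x d : E, d ≠ 0 → ¬ (∀ t : ℝ, x + t • d ∈ X)

/-- Affine metric `G(x)[h,h] = f''(x)[h,h] - (f'(x)[h])²`. -/
noncomputable def affMetric (f : E → ℝ) (x h : E) : ℝ :=
  iteratedFDeriv ℝ 2 f x (fun _ => h) - (fderiv ℝ f x h)^2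

/-- Cubic form `C(x)[h,h,h]`. -/
noncomputable def cubicForm (f : E → ℝ) (x h : E) : ℝ :=
  iteratedFDeriv ℝ 3 f x (fun _ => h)
    - 6 * iteratedFDeriv ℝ 2 f x (fun _ => h) * fderiv ℝ f x h
    + 4 * (fderiv ℝ f x h)^3

/-- Projectively self-concordant barrier with parameter γ on X. -/
def IsPSCBarrier (X : Set E) (f : E → ℝ) (γ : ℝ) : Prop :=
  ContDiffOn ℝ 3 f (interior X) ∧
  (∀ x ∈ interior X, ∀ h : E, h ≠ 0 → 0 < affMetric f x h) ∧
  (∀ x ∈ frontier X, Tendsto f (nhdsWithin x (interior X)) atTop) ∧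
  (∀ x ∈ interior X, ∀ h : E, |cubicForm f x h| ≤ 2 * γ * (affMetric f x h) ^ ((3:ℝ)/2))

/-- `σ_x(h) = inf { 1/t : t > 0, x + t•h ∈ X }`. -/
noncomputable def sigmaDist (X : Set E) (x h : E) : ℝ :=
  sInf {r : ℝ | ∃ t : ℝ, 0 < t ∧ x + t • h ∈ X ∧ r = 1/t}

/-- `ω_x(h) = (σ_x(h) − f'(x)[h]) / √(G(x)[h,h])`. -/
noncomputable def omegaQ (X : Set E) (f : E → ℝ) (x h : E) : ℝ :=
  (sigmaDist X x h - fderiv ℝ f x h) / Real.sqrt (affMetric f x h)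

/-!
Along the ray `t ↦ x + t • h` one has `σ = 1 / (T - t)`, with `T` the exit time of the ray from
`X` (or `σ = 0` if the ray never leaves `X`), so `σ' = σ²`. Together with `G' = C + 4 f'[h] G`
this gives `ω' = √G (ω² - 1 - ω C / (2 G^{3/2}))`, which the curvature hypothesis makes
nonnegative as soon as `ω > 0`.

Positivity of `ω`, i.e. `f'(x)[h] < σ_x(h)`, comes from `exp (-f)`, whose second derivative along
the ray is `-G exp (-f) ≤ 0`: a positive concave function lies below its tangent line, so the
tangent at `x` cannot reach zero before the ray leaves `X`. Equality is excluded because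
`σ - f'[h] ≥ 0` would then have a local minimum where its derivative is `σ² - f''[h,h] = -G < 0`.
-/

section

variable {X U : Set E} {f : E → ℝ} {x h : E} {t : ℝ}

theorem Convex.setOf_add_smul_mem (hU : Convex ℝ U) : Convex ℝ {s : ℝ | x + s • h ∈ U} :=
  (hU.translate_preimage_right x).linear_preimage (LinearMap.toSpanSingleton ℝ E h)

theorem IsOpen.setOf_add_smul_mem (hU : IsOpen U) : IsOpen {s : ℝ | x + s • h ∈ U} :=
  hU.preimage (by fun_prop)

theorem Convex.add_smul_mem_interior_of_lt (hX : Convex ℝ X) (hx : x ∈ interior X)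
    {s u : ℝ} (hu : x + u • h ∈ X) (hs : 0 ≤ s) (hsu : s < u) : x + s • h ∈ interior X := by
  have hu0 : 0 < u := hs.trans_lt hsu
  have hcombo := hX.combo_interior_closure_mem_interior hx (subset_closure hu)
    (a := 1 - s / u) (b := s / u) (by rw [sub_pos, div_lt_one hu0]; exact hsu)
    (div_nonneg hs hu0.le) (by ring)
  convert hcombo using 1
  rw [smul_add, smul_smul, div_mul_cancel₀ _ hu0.ne', ← add_assoc, ← add_smul]
  simp

theorem sigmaDist_add_smul_of_not_bddAbove (hX : Convex ℝ X)
    (hb : ¬ BddAbove {s : ℝ | x + s • h ∈ X}) (ht : x + t • h ∈ X) :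
    sigmaDist X (x + t • h) h = 0 := by
  have hset : {r : ℝ | ∃ s : ℝ, 0 < s ∧ x + t • h + s • h ∈ X ∧ r = 1 / s} = Set.Ioi 0 := by
    ext r
    constructor
    · rintro ⟨s, hs, -, rfl⟩
      exact one_div_pos.2 hs
    · intro (hr : 0 < r)
      obtain ⟨u, hu, hlt⟩ := not_bddAbove_iff.1 hb (t + 1 / r)
      refine ⟨1 / r, one_div_pos.2 hr, ?_, by simp⟩
      rw [add_assoc, ← add_smul]
      exact hX.setOf_add_smul_mem.ordConnected.out ht hu
        ⟨by linarith [one_div_pos.2 hr], hlt.le⟩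
  rw [sigmaDist, hset, csInf_Ioi]

theorem sigmaDist_add_smul_of_bddAbove (hXc : IsClosed X)
    (hb : BddAbove {s : ℝ | x + s • h ∈ X}) (ht : x + t • h ∈ X)
    (htT : t < sSup {s : ℝ | x + s • h ∈ X}) :
    sigmaDist X (x + t • h) h = 1 / (sSup {s : ℝ | x + s • h ∈ X} - t) := by
  have hL : IsClosed {s : ℝ | x + s • h ∈ X} := hXc.preimage (by fun_prop)
  refine IsLeast.csInf_eq ⟨⟨_, sub_pos.2 htT, ?_, rfl⟩, ?_⟩
  · rw [add_assoc, ← add_smul, add_sub_cancel]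
    exact hL.csSup_mem ⟨t, ht⟩ hb
  · rintro _ ⟨s, hs, hsX, rfl⟩
    rw [add_assoc, ← add_smul] at hsX
    exact one_div_le_one_div_of_le hs (by linarith [le_csSup hb hsX])

theorem lt_sSup_of_add_smul_mem_interior (hb : BddAbove {s : ℝ | x + s • h ∈ X})
    (ht : x + t • h ∈ interior X) : t < sSup {s : ℝ | x + s • h ∈ X} := by
  obtain ⟨u, htu, hIco⟩ := exists_Ico_subset_of_mem_nhds
    (isOpen_interior.setOf_add_smul_mem.mem_nhds ht) ⟨t + 1, lt_add_one t⟩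
  calc t < (t + u) / 2 := by linarith
    _ ≤ _ := le_csSup hb <| interior_subset (s := X) <|
      hIco (show (t + u) / 2 ∈ Set.Ico t u from ⟨by linarith, by linarith⟩)

theorem hasDerivAt_sigmaDist_add_smul (hXc : IsClosed X) (hX : Convex ℝ X)
    (ht : x + t • h ∈ interior X) :
    HasDerivAt (fun s : ℝ => sigmaDist X (x + s • h) h) (sigmaDist X (x + t • h) h ^ 2) t := by
  have hS : {s : ℝ | x + s • h ∈ interior X} ∈ nhds t :=
    isOpen_interior.setOf_add_smul_mem.mem_nhds ht
  by_cases hb : BddAbove {s : ℝ | x + s • h ∈ X}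
  · set T := sSup {s : ℝ | x + s • h ∈ X}
    have hσ : ∀ s, x + s • h ∈ interior X → sigmaDist X (x + s • h) h = 1 / (T - s) :=
      fun s hs => sigmaDist_add_smul_of_bddAbove hXc hb (interior_subset hs)
        (lt_sSup_of_add_smul_mem_interior hb hs)
    have hinv : HasDerivAt (fun s : ℝ => 1 / (T - s)) (1 / (T - t) ^ 2) t := by
      simpa [one_div] using ((hasDerivAt_id t).const_sub T).fun_inv
        (sub_ne_zero.2 (lt_sSup_of_add_smul_mem_interior hb ht).ne')
    rw [hσ t ht, div_pow, one_pow]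
    exact hinv.congr_of_eventuallyEq (Filter.mem_of_superset hS hσ)
  · have hσ : ∀ s, x + s • h ∈ interior X → sigmaDist X (x + s • h) h = 0 :=
      fun s hs => sigmaDist_add_smul_of_not_bddAbove hX hb (interior_subset hs)
    rw [hσ t ht, zero_pow two_ne_zero]
    exact (hasDerivAt_const t 0).congr_of_eventuallyEq (Filter.mem_of_superset hS hσ)

theorem hasDerivAt_iteratedFDeriv_add_smul {n : WithTop ℕ∞} {k : ℕ} (hU : IsOpen U)
    (hf : ContDiffOn ℝ n f U) (hk : (k : WithTop ℕ∞) < n) (ht : x + t • h ∈ U) :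
    HasDerivAt (fun s : ℝ => iteratedFDeriv ℝ k f (x + s • h) (fun _ => h))
      (iteratedFDeriv ℝ (k + 1) f (x + t • h) (fun _ => h)) t := by
  have hline : HasDerivAt (fun s : ℝ => x + s • h) h t := by
    simpa using ((hasDerivAt_id t).smul_const h).const_add x
  have hd := ((hf.contDiffAt (hU.mem_nhds ht)).differentiableAt_iteratedFDeriv hk).hasFDerivAt
  exact (ContinuousMultilinearMap.apply ℝ (fun _ : Fin k => E) ℝ (fun _ => h)).hasFDerivAt
    |>.comp_hasDerivAt t (hd.comp_hasDerivAt t hline)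

theorem hasDerivAt_comp_add_smul_s12 (hU : IsOpen U) (hf : ContDiffOn ℝ 1 f U)
    (ht : x + t • h ∈ U) :
    HasDerivAt (fun s : ℝ => f (x + s • h)) (fderiv ℝ f (x + t • h) h) t := by
  simpa using hasDerivAt_iteratedFDeriv_add_smul (k := 0) hU hf (by norm_num) ht

theorem hasDerivAt_fderiv_add_smul (hU : IsOpen U) (hf : ContDiffOn ℝ 2 f U)
    (ht : x + t • h ∈ U) :
    HasDerivAt (fun s : ℝ => fderiv ℝ f (x + s • h) h)
      (iteratedFDeriv ℝ 2 f (x + t • h) (fun _ => h)) t := by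
  simpa using hasDerivAt_iteratedFDeriv_add_smul (k := 1) hU hf (by norm_num) ht

theorem concaveOn_exp_neg_comp_add_smul (hU : IsOpen U) (hUc : Convex ℝ U)
    (hf : ContDiffOn ℝ 2 f U) (hG : ∀ y ∈ U, 0 ≤ affMetric f y h) :
    ConcaveOn ℝ {s : ℝ | x + s • h ∈ U} (fun s => Real.exp (-f (x + s • h))) := by
  have hS : IsOpen {s : ℝ | x + s • h ∈ U} := hU.setOf_add_smul_mem
  have hφ : ∀ s ∈ {s : ℝ | x + s • h ∈ U}, HasDerivAt (fun s => Real.exp (-f (x + s • h)))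
      (-fderiv ℝ f (x + s • h) h * Real.exp (-f (x + s • h))) s := fun s hs => by
    simpa [mul_comm] using
      (hasDerivAt_comp_add_smul_s12 hU (hf.of_le (by norm_num)) hs).neg.exp
  refine concaveOn_of_hasDerivWithinAt2_nonpos hUc.setOf_add_smul_mem
    (fun s hs => (hφ s hs).continuousAt.continuousWithinAt)
    (f' := fun s => -fderiv ℝ f (x + s • h) h * Real.exp (-f (x + s • h)))
    (f'' := fun s => -affMetric f (x + s • h) h * Real.exp (-f (x + s • h)))
    ?_ ?_ ?_ <;> rw [hS.interior_eq] <;> intro s hs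
  · exact (hφ s hs).hasDerivWithinAt
  · refine (((hasDerivAt_fderiv_add_smul hU hf hs).neg.mul (hφ s hs)).congr_deriv ?_)
      |>.hasDerivWithinAt
    simp only [affMetric, Pi.neg_apply]
    ring
  · exact mul_nonpos_of_nonpos_of_nonneg (neg_nonpos.2 (hG _ hs)) (Real.exp_pos _).le

theorem fderiv_le_sigmaDist (hX : Convex ℝ X) (hf : ContDiffOn ℝ 2 f (interior X))
    (hG : ∀ y ∈ interior X, 0 ≤ affMetric f y h) (hx : x ∈ interior X) :
    fderiv ℝ f x h ≤ sigmaDist X x h := by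
  have h0 : (0 : ℝ) ∈ {s : ℝ | x + s • h ∈ interior X} := by simpa using hx
  have hlt : ∀ s, 0 < s → x + s • h ∈ interior X → fderiv ℝ f x h * s < 1 := by
    intro s hs hsX
    have hφ' : HasDerivAt (fun s : ℝ => Real.exp (-f (x + s • h)))
        (Real.exp (-f x) * -fderiv ℝ f x h) 0 := by
      simpa using (hasDerivAt_comp_add_smul_s12 isOpen_interior (hf.of_le (by norm_num)) h0).neg.exp
    have hslope := (concaveOn_exp_neg_comp_add_smul isOpen_interior hX.interior hf hG)
      |>.slope_le_of_hasDerivAt h0 hsX hs hφ'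
    rw [slope_def_field, div_le_iff₀ (by simpa using hs)] at hslope
    have hpos := Real.exp_pos (-f (x + s • h))
    have hpos₀ := Real.exp_pos (-f x)
    simp only [zero_smul, add_zero, sub_zero] at hslope
    nlinarith
  have hle : ∀ s, 0 < s → x + s • h ∈ X → fderiv ℝ f x h * s ≤ 1 := by
    intro s hs hsX
    by_contra! hgt
    have ha : 0 < fderiv ℝ f x h := pos_of_mul_pos_left (one_pos.trans hgt) hs.le
    have hinv : (fderiv ℝ f x h)⁻¹ < s := by rwa [inv_lt_iff_one_lt_mul₀ ha, mul_comm]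
    have := hlt _ (inv_pos.2 ha)
      (hX.add_smul_mem_interior_of_lt hx hsX (inv_nonneg.2 ha.le) hinv)
    simp [ha.ne'] at this
  obtain ⟨u, hu, hIco⟩ :=
    exists_Ico_subset_of_mem_nhds (isOpen_interior.setOf_add_smul_mem.mem_nhds h0) ⟨1, one_pos⟩
  refine le_csInf ⟨_, u / 2, by positivity,
    interior_subset (hIco ⟨by positivity, by linarith⟩), rfl⟩ ?_
  rintro _ ⟨s, hs, hsX, rfl⟩
  rw [le_div_iff₀ hs]
  exact hle s hs hsX

theorem fderiv_lt_sigmaDist (hXc : IsClosed X) (hX : Convex ℝ X)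
    (hf : ContDiffOn ℝ 2 f (interior X)) (hG : ∀ y ∈ interior X, 0 < affMetric f y h)
    (hx : x ∈ interior X) : fderiv ℝ f x h < sigmaDist X x h := by
  have h0 : x + (0 : ℝ) • h ∈ interior X := by simpa using hx
  refine (fderiv_le_sigmaDist hX hf (fun y hy => (hG y hy).le) hx).lt_of_ne fun heq => ?_
  have hmin : IsLocalMin (fun s : ℝ => sigmaDist X (x + s • h) h - fderiv ℝ f (x + s • h) h) 0 := by
    filter_upwards [isOpen_interior.setOf_add_smul_mem.mem_nhds h0] with s hs
    simpa [heq] using fderiv_le_sigmaDist hX hf (fun y hy => (hG y hy).le) hs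
  have hderiv := (hasDerivAt_sigmaDist_add_smul hXc hX h0).sub
    (hasDerivAt_fderiv_add_smul isOpen_interior hf h0)
  have := hmin.hasDerivAt_eq_zero hderiv
  have hGx := hG x hx
  simp only [zero_smul, add_zero, ← heq] at this
  simp only [affMetric] at hGx
  linarith

theorem omegaQ_pos (hXc : IsClosed X) (hX : Convex ℝ X) (hf : ContDiffOn ℝ 2 f (interior X))
    (hG : ∀ y ∈ interior X, 0 < affMetric f y h) (hx : x ∈ interior X) :
    0 < omegaQ X f x h :=
  div_pos (sub_pos.2 (fderiv_lt_sigmaDist hXc hX hf hG hx)) (Real.sqrt_pos.2 (hG x hx))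

theorem hasDerivAt_omegaQ_add_smul (hXc : IsClosed X) (hX : Convex ℝ X)
    (hf : ContDiffOn ℝ 3 f (interior X)) (ht : x + t • h ∈ interior X)
    (hG : 0 < affMetric f (x + t • h) h) :
    HasDerivAt (fun s : ℝ => omegaQ X f (x + s • h) h)
      (√(affMetric f (x + t • h) h) * (omegaQ X f (x + t • h) h ^ 2 - 1 -
        omegaQ X f (x + t • h) h * cubicForm f (x + t • h) h /
          (2 * affMetric f (x + t • h) h ^ ((3 : ℝ) / 2)))) t := by
  have hf₁ := hasDerivAt_fderiv_add_smul isOpen_interior (hf.of_le (by norm_num)) ht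
  have hf₂ := hasDerivAt_iteratedFDeriv_add_smul (k := 2) isOpen_interior hf (by norm_num) ht
  have hGd := (hf₂.sub (hf₁.pow 2)).sqrt hG.ne'
  have hω := ((hasDerivAt_sigmaDist_add_smul hXc hX ht).sub hf₁).div hGd
    (Real.sqrt_pos.2 hG).ne'
  refine hω.congr_deriv ?_
  have hq := Real.sq_sqrt hG.le
  have hq0 := Real.sqrt_pos.2 hG
  rw [show (3 : ℝ) / 2 = 1 + 1 / 2 by norm_num, Real.rpow_add hG, Real.rpow_one,
    ← Real.sqrt_eq_rpow]
  simp only [omegaQ, cubicForm, affMetric, Pi.sub_apply, Pi.pow_apply] at hq hq0 ⊢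
  generalize √(iteratedFDeriv ℝ 2 f (x + t • h) (fun _ => h) - fderiv ℝ f (x + t • h) h ^ 2) = q
    at hq hq0 ⊢
  rw [← hq]
  field_simp
  linear_combination (2 * q ^ 2 + 4 * fderiv ℝ f (x + t • h) h *
    (sigmaDist X (x + t • h) h - fderiv ℝ f (x + t • h) h)) * hq

theorem monotoneOn_omegaQ_add_smul (hXc : IsClosed X) (hX : Convex ℝ X)
    (hf : ContDiffOn ℝ 3 f (interior X))
    (hG : ∀ y ∈ interior X, 0 < affMetric f y h)
    (hcurv : ∀ y ∈ interior X, cubicForm f y h ≤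
      2 * (omegaQ X f y h ^ 2 - 1) / omegaQ X f y h * affMetric f y h ^ ((3 : ℝ) / 2)) :
    MonotoneOn (fun t : ℝ => omegaQ X f (x + t • h) h) {t : ℝ | x + t • h ∈ interior X} := by
  have hS : IsOpen {t : ℝ | x + t • h ∈ interior X} := isOpen_interior.setOf_add_smul_mem
  have hω' := fun t (ht : x + t • h ∈ interior X) =>
    hasDerivAt_omegaQ_add_smul hXc hX hf ht (hG _ ht)
  refine monotoneOn_of_deriv_nonneg hX.interior.setOf_add_smul_mem
    (fun t ht => (hω' t ht).continuousAt.continuousWithinAt) ?_ ?_ <;> rw [hS.interior_eq]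
  · exact fun t ht => (hω' t ht).differentiableAt.differentiableWithinAt
  intro t ht
  set y := x + t • h
  have hω : 0 < omegaQ X f y h := omegaQ_pos hXc hX (hf.of_le (by norm_num)) hG ht
  have hP := Real.rpow_pos_of_pos (hG y ht) ((3 : ℝ) / 2)
  have hC : omegaQ X f y h * cubicForm f y h ≤
      2 * (omegaQ X f y h ^ 2 - 1) * affMetric f y h ^ ((3 : ℝ) / 2) := by
    calc _ ≤ omegaQ X f y h * (2 * (omegaQ X f y h ^ 2 - 1) / omegaQ X f y h *
          affMetric f y h ^ ((3 : ℝ) / 2)) := mul_le_mul_of_nonneg_left (hcurv y ht) hω.le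
      _ = _ := by field_simp
  rw [(hω' t ht).deriv]
  refine mul_nonneg (Real.sqrt_nonneg _) (sub_nonneg.2 ?_)
  rw [div_le_iff₀ (by positivity)]
  linarith

end

theorem stmt_12_general {n : ℕ} (X : Set (EuclideanSpace ℝ (Fin n)))
    (hX : IsRegularConvex X) (ν : ℝ)
    (f : EuclideanSpace ℝ (Fin n) → ℝ)
    (hf : IsPSCBarrier X f ((ν - 2)/Real.sqrt (ν - 1)))
    (hcurv : ∀ x ∈ interior X, ∀ h : EuclideanSpace ℝ (Fin n), h ≠ 0 →
      cubicForm f x h ≤ 2 * ((omegaQ X f x h)^2 - 1) / omegaQ X f x h * (affMetric f x h) ^ ((3:ℝ)/2))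
    (x h : EuclideanSpace ℝ (Fin n)) (hh : h ≠ 0) :
    MonotoneOn (fun t : ℝ => omegaQ X f (x + t • h) h)
      {t : ℝ | x + t • h ∈ interior X} := by
  obtain ⟨hXc, hXconv, -, -⟩ := hX
  obtain ⟨hfc, hG, -, -⟩ := hf
  exact monotoneOn_omegaQ_add_smul hXc hXconv hfc (fun y hy => hG y hy h hh)
    (fun y hy => hcurv y hy h hh)

theorem stmt_12 {n : ℕ} (X : Set (EuclideanSpace ℝ (Fin n)))
    (hX : IsRegularConvex X) (ν : ℝ) (hν : 2 ≤ ν)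
    (f : EuclideanSpace ℝ (Fin n) → ℝ)
    (hf : IsPSCBarrier X f ((ν - 2)/Real.sqrt (ν - 1)))
    (hcurv : ∀ x ∈ interior X, ∀ h : EuclideanSpace ℝ (Fin n), h ≠ 0 →
      cubicForm f x h ≤ 2 * ((omegaQ X f x h)^2 - 1) / omegaQ X f x h * (affMetric f x h) ^ ((3:ℝ)/2))
    (x h : EuclideanSpace ℝ (Fin n)) (hh : h ≠ 0) :
    MonotoneOn (fun t : ℝ => omegaQ X f (x + t • h) h)
      {t : ℝ | x + t • h ∈ interior X} :=
  stmt_12_general X hX ν f hf hcurv x h hh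
end

section
/- Let X ⊂ ℝⁿ be a regular convex set, f a projectively self-concordant barrier on X, p ∈ ℝⁿ, and suppose x* ∈ int X is a critical point of q_p(x) = f(x) + log(1 + ⟨x, p⟩) (with 1 + ⟨x, p⟩ > 0 on int X). Then the Hessian of q_p at x* is positive definite, and at x = x* the identities f'(x) = −p/(1 + ⟨x,p⟩), p = −f'(x)/(1 + ⟨f'(x), x⟩), and 1 + ⟨f'(x), x⟩ = 1/(1 + ⟨x, p⟩) > 0 hold. -/
open Filter

variable {E : Type*} [NormedAddCommGroup E] [NormedSpace ℝ E]

/-!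
At a critical point `x` of `q = f + log (1 + ⟪·, p⟫)` we have `∇f(x) = -p / (1 + ⟪x, p⟫)`, so the
Hessian `-p pᵀ / (1 + ⟪x, p⟫)²` of the logarithmic term is `-f'(x) f'(x)ᵀ`. Hence `q''(x)` is the
affine metric `f''(x) - f'(x) f'(x)ᵀ`, which is positive definite for a projectively self-concordant
barrier. The duality identities are algebra on `∇f(x) = -p / (1 + ⟪x, p⟫)`.
-/

open RealInnerProductSpace

theorem HasGradientAt.add {𝕜 F : Type*} [RCLike 𝕜] [NormedAddCommGroup F] [InnerProductSpace 𝕜 F]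
    [CompleteSpace F] {f g : F → 𝕜} {f' g' x : F}
    (hf : HasGradientAt f f' x) (hg : HasGradientAt g g' x) :
    HasGradientAt (fun y => f y + g y) (f' + g') x := by
  rw [hasGradientAt_iff_hasFDerivAt, map_add]
  exact HasFDerivAt.add hf hg

section

variable {F : Type*} [NormedAddCommGroup F] [InnerProductSpace ℝ F]

theorem hasFDerivAt_one_add_inner (p x : F) :
    HasFDerivAt (fun y => 1 + ⟪y, p⟫) (innerSL ℝ p) x := by
  simpa only [innerSL_apply_apply, real_inner_comm p] using (innerSL ℝ p).hasFDerivAt.const_add 1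

theorem hasFDerivAt_log_one_add_inner {p x : F} (hx : 1 + ⟪x, p⟫ ≠ 0) :
    HasFDerivAt (fun y => Real.log (1 + ⟪y, p⟫)) ((1 + ⟪x, p⟫)⁻¹ • innerSL ℝ p) x :=
  (hasFDerivAt_one_add_inner p x).log hx

theorem hasFDerivAt_inv_one_add_inner_smul_innerSL {p x : F} (hx : 1 + ⟪x, p⟫ ≠ 0) :
    HasFDerivAt (fun y => (1 + ⟪y, p⟫)⁻¹ • (innerSL ℝ p : F →L[ℝ] ℝ))
      ((-((1 + ⟪x, p⟫) ^ 2)⁻¹ • (innerSL ℝ p : F →L[ℝ] ℝ)).smulRight (innerSL ℝ p)) x :=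
  ((hasDerivAt_inv hx).comp_hasFDerivAt x (hasFDerivAt_one_add_inner p x)).smul_const
    (innerSL ℝ p : F →L[ℝ] ℝ)

theorem iteratedFDeriv_two_log_one_add_inner {p x : F} (hx : 1 + ⟪x, p⟫ ≠ 0) (h : F) :
    iteratedFDeriv ℝ 2 (fun y => Real.log (1 + ⟪y, p⟫)) x (fun _ => h)
      = -((1 + ⟪x, p⟫)⁻¹ * ⟪p, h⟫) ^ 2 := by
  have hopen : IsOpen {y : F | 1 + ⟪y, p⟫ ≠ 0} :=
    isOpen_ne_fun (by fun_prop) continuous_const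
  have heq : fderiv ℝ (fun y => Real.log (1 + ⟪y, p⟫)) =ᶠ[nhds x]
      fun y => (1 + ⟪y, p⟫)⁻¹ • innerSL ℝ p := by
    filter_upwards [hopen.mem_nhds hx] with y hy
    exact (hasFDerivAt_log_one_add_inner hy).fderiv
  rw [iteratedFDeriv_two_apply, heq.fderiv_eq,
    (hasFDerivAt_inv_one_add_inner_smul_innerSL hx).fderiv]
  simp only [ContinuousLinearMap.smulRight_apply, FunLike.coe_smul, Pi.smul_apply,
    innerSL_apply_apply, smul_eq_mul, ← inv_pow]
  ring

theorem iteratedFDeriv_two_add_log_one_add_inner {f : F → ℝ} {p x : F} (hf : ContDiffAt ℝ 2 f x)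
    (hx : 1 + ⟪x, p⟫ ≠ 0) (h : F) :
    iteratedFDeriv ℝ 2 (fun y => f y + Real.log (1 + ⟪y, p⟫)) x (fun _ => h)
      = iteratedFDeriv ℝ 2 f x (fun _ => h) - ((1 + ⟪x, p⟫)⁻¹ * ⟪p, h⟫) ^ 2 := by
  have hlog : ContDiffAt ℝ 2 (fun y => Real.log (1 + ⟪y, p⟫)) x :=
    (contDiffAt_const.add (contDiffAt_id.inner ℝ contDiffAt_const)).log hx
  rw [fun_iteratedFDeriv_add_apply hf hlog, add_apply,
    iteratedFDeriv_two_log_one_add_inner hx]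
  ring

theorem one_add_inner_eq_inv_of_eq_neg_inv_smul {g p x : F} (hx : 1 + ⟪x, p⟫ ≠ 0)
    (hg : g = -(1 + ⟪x, p⟫)⁻¹ • p) : 1 + ⟪g, x⟫ = (1 + ⟪x, p⟫)⁻¹ := by
  rw [hg, real_inner_smul_left, real_inner_comm x p]
  field_simp
  ring

theorem eq_neg_inv_smul_of_eq_neg_inv_smul {g p x : F} (hx : 1 + ⟪x, p⟫ ≠ 0)
    (hg : g = -(1 + ⟪x, p⟫)⁻¹ • p) : p = -(1 + ⟪g, x⟫)⁻¹ • g := by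
  rw [one_add_inner_eq_inv_of_eq_neg_inv_smul hx hg, inv_inv, hg, smul_smul, neg_mul_neg,
    mul_inv_cancel₀ hx, one_smul]

variable [CompleteSpace F]

theorem hasGradientAt_log_one_add_inner {p x : F} (hx : 1 + ⟪x, p⟫ ≠ 0) :
    HasGradientAt (fun y => Real.log (1 + ⟪y, p⟫)) ((1 + ⟪x, p⟫)⁻¹ • p) x := by
  rw [hasGradientAt_iff_hasFDerivAt, map_smul]
  exact hasFDerivAt_log_one_add_inner hx

theorem gradient_add_log_one_add_inner {f : F → ℝ} {p x : F} (hf : DifferentiableAt ℝ f x)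
    (hx : 1 + ⟪x, p⟫ ≠ 0) :
    gradient (fun y => f y + Real.log (1 + ⟪y, p⟫)) x = gradient f x + (1 + ⟪x, p⟫)⁻¹ • p :=
  (hf.hasGradientAt.add (hasGradientAt_log_one_add_inner hx)).gradient

theorem iteratedFDeriv_two_add_log_one_add_inner_eq_affMetric {f : F → ℝ} {p x : F}
    (hf : ContDiffAt ℝ 2 f x) (hx : 1 + ⟪x, p⟫ ≠ 0) (hgrad : gradient f x = -(1 + ⟪x, p⟫)⁻¹ • p)
    (h : F) :
    iteratedFDeriv ℝ 2 (fun y => f y + Real.log (1 + ⟪y, p⟫)) x (fun _ => h) = affMetric f x h := by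
  have hfderiv : fderiv ℝ f x h = -(1 + ⟪x, p⟫)⁻¹ * ⟪p, h⟫ := by
    rw [← inner_gradient_left, hgrad, real_inner_smul_left]
  rw [iteratedFDeriv_two_add_log_one_add_inner hf hx, affMetric, hfderiv]
  ring

end

theorem stmt_13_general {n : ℕ} (X : Set (EuclideanSpace ℝ (Fin n))) (γ : ℝ)
    (f : EuclideanSpace ℝ (Fin n) → ℝ) (hf : IsPSCBarrier X f γ)
    (p : EuclideanSpace ℝ (Fin n))
    (hpos : ∀ x ∈ interior X, (0:ℝ) < 1 + inner ℝ x p)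
    (q : EuclideanSpace ℝ (Fin n) → ℝ)
    (hq : q = fun x => f x + Real.log (1 + inner ℝ x p))
    (xs : EuclideanSpace ℝ (Fin n)) (hxs : xs ∈ interior X)
    (hcrit : gradient q xs = 0) :
    (∀ h : EuclideanSpace ℝ (Fin n), h ≠ 0 → 0 < iteratedFDeriv ℝ 2 q xs (fun _ => h)) ∧
    gradient f xs = -(1 + (inner ℝ xs p : ℝ))⁻¹ • p ∧
    p = -(1 + (inner ℝ (gradient f xs) xs : ℝ))⁻¹ • gradient f xs ∧
    1 + (inner ℝ (gradient f xs) xs : ℝ) = (1 + (inner ℝ xs p : ℝ))⁻¹ ∧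
    0 < 1 + (inner ℝ (gradient f xs) xs : ℝ) := by
  have hc : 0 < 1 + ⟪xs, p⟫ := hpos xs hxs
  have hfC2 : ContDiffAt ℝ 2 f xs :=
    (hf.1.contDiffAt (isOpen_interior.mem_nhds hxs)).of_le (by norm_num)
  have hgrad : gradient f xs = -(1 + ⟪xs, p⟫)⁻¹ • p := by
    rw [hq, gradient_add_log_one_add_inner (hfC2.differentiableAt (by norm_num)) hc.ne'] at hcrit
    rw [eq_neg_of_add_eq_zero_left hcrit, neg_smul]
  have hdual := one_add_inner_eq_inv_of_eq_neg_inv_smul hc.ne' hgrad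
  refine ⟨fun h hh => ?_, hgrad, eq_neg_inv_smul_of_eq_neg_inv_smul hc.ne' hgrad, hdual,
    hdual ▸ inv_pos.2 hc⟩
  rw [hq, iteratedFDeriv_two_add_log_one_add_inner_eq_affMetric hfC2 hc.ne' hgrad]
  exact hf.2.1 xs hxs h hh

theorem stmt_13 {n : ℕ} (X : Set (EuclideanSpace ℝ (Fin n)))
    (hX : IsRegularConvex X) (γ : ℝ)
    (f : EuclideanSpace ℝ (Fin n) → ℝ) (hf : IsPSCBarrier X f γ)
    (p : EuclideanSpace ℝ (Fin n))
    (hpos : ∀ x ∈ interior X, (0:ℝ) < 1 + inner ℝ x p)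
    (q : EuclideanSpace ℝ (Fin n) → ℝ)
    (hq : q = fun x => f x + Real.log (1 + inner ℝ x p))
    (xs : EuclideanSpace ℝ (Fin n)) (hxs : xs ∈ interior X)
    (hcrit : gradient q xs = 0) :
    (∀ h : EuclideanSpace ℝ (Fin n), h ≠ 0 → 0 < iteratedFDeriv ℝ 2 q xs (fun _ => h)) ∧
    gradient f xs = -(1 + (inner ℝ xs p : ℝ))⁻¹ • p ∧
    p = -(1 + (inner ℝ (gradient f xs) xs : ℝ))⁻¹ • gradient f xs ∧
    1 + (inner ℝ (gradient f xs) xs : ℝ) = (1 + (inner ℝ xs p : ℝ))⁻¹ ∧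
    0 < 1 + (inner ℝ (gradient f xs) xs : ℝ) :=
  stmt_13_general X γ f hf p hpos q hq xs hxs hcrit
end

section
/- Let X ⊂ ℝⁿ be a regular convex set, f a projectively self-concordant barrier on X with f''(x) − f'(x)f'(x)ᵀ ≻ 0 and satisfying ⟨f'(x), y − x⟩ < 1 for all x, y ∈ int X. The map Φ(x) = −f'(x)/(1 + ⟨f'(x), x⟩) is injective on the set S = { x ∈ int X : 1 + ⟨f'(x), x⟩ > 0 }. -/
open Filter

variable {E : Type*} [NormedAddCommGroup E] [NormedSpace ℝ E]

/-!
For `p` in the image put `q_p = f + log (1 + ⟪p, ·⟫)`; a point `x` with `1 + ⟪∇f x, x⟫ > 0` is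
mapped to `p` exactly when it is a critical point of `q_p`. Along the segment from one such
critical point to another, the directional derivative `F` of `q_p` vanishes at both ends, and at
every zero of `F` its derivative is `f''[d,d] - (f'd)² > 0`, because there `(f'd)²` equals the
square of the derivative of the logarithm. A real function whose derivative is positive at each of
its zeros cannot vanish twice on an interval, so the two critical points coincide.
-/

open Set Filter Topology

local notation "⟪" x ", " y "⟫" => inner ℝ x y

theorem HasDerivAt.eventually_pos_nhdsGT {F : ℝ → ℝ} {c t : ℝ} (hF : HasDerivAt F c t)
    (h0 : F t = 0) (hc : 0 < c) : ∀ᶠ s in 𝓝[>] t, 0 < F s := by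
  filter_upwards [nhdsWithin_le_nhds (eventually_nhdsWithin_sign_eq_of_deriv_pos
    (hF.deriv ▸ hc) h0), self_mem_nhdsWithin] with s hs hts
  rwa [sign_eq_one_iff.mpr (sub_pos.mpr hts), sign_eq_one_iff] at hs

theorem HasDerivAt.eventually_neg_nhdsLT {F : ℝ → ℝ} {c t : ℝ} (hF : HasDerivAt F c t)
    (h0 : F t = 0) (hc : 0 < c) : ∀ᶠ s in 𝓝[<] t, F s < 0 := by
  filter_upwards [nhdsWithin_le_nhds (eventually_nhdsWithin_sign_eq_of_deriv_pos
    (hF.deriv ▸ hc) h0), self_mem_nhdsWithin] with s hs hst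
  rwa [sign_eq_neg_one_iff.mpr (sub_neg.mpr hst), sign_eq_neg_one_iff] at hs

theorem eq_of_hasDerivAt_pos_of_eq_zero {F F' : ℝ → ℝ} {a b : ℝ} (hab : a ≤ b)
    (hF : ∀ t ∈ Icc a b, HasDerivAt F (F' t) t)
    (hpos : ∀ t ∈ Icc a b, F t = 0 → 0 < F' t) (ha : F a = 0) (hb : F b = 0) : a = b := by
  by_contra hne
  have ha' : a ∈ Icc a b := ⟨le_rfl, hab⟩
  obtain ⟨c, hac, hFc⟩ : ∃ c ∈ Ioo a b, ∀ s ∈ Ioc a c, 0 < F s := by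
    have hright : ∀ᶠ s in 𝓝[>] a, 0 < F s ∧ s < b :=
      ((hF a ha').eventually_pos_nhdsGT ha (hpos a ha' ha)).and
        (nhdsWithin_le_nhds (gt_mem_nhds (hab.lt_of_ne hne)))
    obtain ⟨c, hc, hsub⟩ := mem_nhdsGT_iff_exists_Ioc_subset.mp hright
    exact ⟨c, ⟨hc, (hsub ⟨hc, le_rfl⟩).2⟩, fun s hs => (hsub hs).1⟩
  -- the first point of `[c, b]` where `F ≤ 0` is a zero with `F > 0` just to its left
  have hcont : ContinuousOn F (Icc c b) := fun t ht =>
    (hF t ⟨hac.1.le.trans ht.1, ht.2⟩).continuousAt.continuousWithinAt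
  have hT : IsCompact (Icc c b ∩ F ⁻¹' Iic 0) :=
    isCompact_Icc.of_isClosed_subset
      (hcont.preimage_isClosed_of_isClosed isClosed_Icc isClosed_Iic) inter_subset_left
  obtain ⟨t₀, ⟨⟨hct₀, ht₀b⟩, hFt₀⟩, hmin⟩ :=
    hT.exists_isLeast ⟨b, ⟨hac.2.le, le_rfl⟩, hb.le⟩
  have ht₀a : a < t₀ := hac.1.trans_le hct₀
  have ht₀ : t₀ ∈ Icc a b := ⟨ht₀a.le, ht₀b⟩
  have hpos_before : ∀ᶠ s in 𝓝[<] t₀, 0 < F s := by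
    filter_upwards [Ioo_mem_nhdsLT ht₀a] with s ⟨has, hst⟩
    rcases le_or_gt s c with hsc | hcs
    · exact hFc s ⟨has, hsc⟩
    · by_contra hs
      exact (hmin ⟨⟨hcs.le, hst.le.trans ht₀b⟩, not_lt.mp hs⟩).not_gt hst
  have hzero : F t₀ = 0 :=
    le_antisymm hFt₀ (ge_of_tendsto (tendsto_nhdsWithin_of_tendsto_nhds
      (hF t₀ ht₀).continuousAt.tendsto) (hpos_before.mono fun _ => le_of_lt))
  obtain ⟨s, hneg, hpos⟩ :=
    (((hF t₀ ht₀).eventually_neg_nhdsLT hzero (hpos t₀ ht₀ hzero)).and hpos_before).exists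
  exact hneg.not_gt hpos

theorem hasDerivAt_add_smul (x d : E) (t : ℝ) : HasDerivAt (fun s : ℝ => x + s • d) d t := by
  simpa using ((hasDerivAt_id t).smul_const d).const_add x

theorem hasDerivAt_fderiv_apply_add_smul {F : Type*} [NormedAddCommGroup F] [NormedSpace ℝ F]
    {f : E → F} {U : Set E} (hU : IsOpen U)
    (hf : ContDiffOn ℝ 2 f U) {x d : E} {t : ℝ} (ht : x + t • d ∈ U) :
    HasDerivAt (fun s : ℝ => fderiv ℝ f (x + s • d) d)
      (iteratedFDeriv ℝ 2 f (x + t • d) (fun _ => d)) t := by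
  have h1 : ContDiffOn ℝ 1 (fderiv ℝ f) U := hf.fderiv_of_isOpen hU (by norm_num)
  have hdiff : DifferentiableAt ℝ (fderiv ℝ f) (x + t • d) :=
    (h1.differentiableOn one_ne_zero).differentiableAt (hU.mem_nhds ht)
  have hcomp : HasDerivAt (fun s : ℝ => fderiv ℝ f (x + s • d))
      (fderiv ℝ (fderiv ℝ f) (x + t • d) d) t :=
    hdiff.hasFDerivAt.comp_hasDerivAt t (hasDerivAt_add_smul x d t)
  rw [iteratedFDeriv_two_apply]
  simpa using hcomp.clm_apply (hasDerivAt_const t d)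

theorem fderiv_apply_add_div_eq_zero {f : E → ℝ} {ℓ : E →L[ℝ] ℝ} {z : E} (hz : 1 + ℓ z ≠ 0)
    (hc : (1 + ℓ z) • fderiv ℝ f z + ℓ = 0) (v : E) : fderiv ℝ f z v + ℓ v / (1 + ℓ z) = 0 := by
  have hv := congrArg (· v) hc
  simp only [add_apply, smul_apply, smul_eq_mul, zero_apply] at hv
  field_simp
  linarith

/-- `hcx`, `hcy` say that `x`, `y` are critical points of `f + log (1 + ℓ)`, denominator cleared. -/
theorem eq_of_smul_fderiv_add_eq_zero {f : E → ℝ} {U : Set E} (hU : IsOpen U)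
    (hUc : Convex ℝ U) (hf : ContDiffOn ℝ 2 f U)
    (hG : ∀ z ∈ U, ∀ h : E, h ≠ 0 → 0 < affMetric f z h) (ℓ : E →L[ℝ] ℝ) {x y : E}
    (hx : x ∈ U) (hy : y ∈ U) (hℓx : 0 < 1 + ℓ x) (hℓy : 0 < 1 + ℓ y)
    (hcx : (1 + ℓ x) • fderiv ℝ f x + ℓ = 0) (hcy : (1 + ℓ y) • fderiv ℝ f y + ℓ = 0) :
    x = y := by
  by_contra hxy
  set d := y - x with hd
  have hd0 : d ≠ 0 := sub_ne_zero.mpr (Ne.symm hxy)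
  have hseg : ∀ t ∈ Icc (0 : ℝ) 1, x + t • d ∈ U := fun t ht => hUc.add_smul_sub_mem hx hy ht
  have hend : x + (0 : ℝ) • d = x ∧ x + (1 : ℝ) • d = y := by simp [hd]
  set A : ℝ → ℝ := fun t => 1 + ℓ (x + t • d) with hA
  have hA_pos : ∀ t ∈ Icc (0 : ℝ) 1, 0 < A t := by
    rintro t ⟨ht0, ht1⟩
    have : A t = (1 - t) * (1 + ℓ x) + t * (1 + ℓ y) := by
      simp only [hA, hd, map_add, map_smul, map_sub, smul_eq_mul]; ring
    rw [this]
    nlinarith [mul_nonneg (sub_nonneg.mpr ht1) hℓx.le, mul_nonneg ht0 hℓy.le]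
  have hA_deriv (t : ℝ) : HasDerivAt A (ℓ d) t :=
    (ℓ.hasFDerivAt.comp_hasDerivAt t (hasDerivAt_add_smul x d t)).const_add 1
  -- `q` is the derivative of `f + log A` along the segment
  set q : ℝ → ℝ := fun t => fderiv ℝ f (x + t • d) d + ℓ d / A t with hq
  set q' : ℝ → ℝ := fun t => iteratedFDeriv ℝ 2 f (x + t • d) (fun _ => d) - ℓ d ^ 2 / A t ^ 2
    with hq'
  have hq_deriv : ∀ t ∈ Icc (0 : ℝ) 1, HasDerivAt q (q' t) t := by
    intro t ht
    refine ((hasDerivAt_fderiv_apply_add_smul hU hf (hseg t ht)).add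
      ((hasDerivAt_const t (ℓ d)).div (hA_deriv t) (hA_pos t ht).ne')).congr_deriv ?_
    field_simp
    ring
  have hq'_pos : ∀ t ∈ Icc (0 : ℝ) 1, q t = 0 → 0 < q' t := by
    intro t ht hqt
    have hlog : ℓ d / A t = -fderiv ℝ f (x + t • d) d := by linarith
    have := hG _ (hseg t ht) d hd0
    rw [affMetric] at this
    simpa only [hq', ← div_pow, hlog, neg_sq] using this
  have hq0 : q 0 = 0 := by
    simpa only [hq, hA, hend.1] using fderiv_apply_add_div_eq_zero hℓx.ne' hcx d
  have hq1 : q 1 = 0 := by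
    simpa only [hq, hA, hend.2] using fderiv_apply_add_div_eq_zero hℓy.ne' hcy d
  exact zero_ne_one (eq_of_hasDerivAt_pos_of_eq_zero zero_le_one hq_deriv hq'_pos hq0 hq1)

theorem one_add_inner_neg_inv_smul {H : Type*} [NormedAddCommGroup H] [InnerProductSpace ℝ H]
    {g z : H} (h : 1 + ⟪g, z⟫ ≠ 0) : 1 + ⟪-(1 + ⟪g, z⟫)⁻¹ • g, z⟫ = (1 + ⟪g, z⟫)⁻¹ := by
  rw [real_inner_smul_left]
  field_simp
  ring

theorem smul_fderiv_add_innerSL_eq_zero {H : Type*} [NormedAddCommGroup H]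
    [InnerProductSpace ℝ H] [CompleteSpace H] {f : H → ℝ} {z p : H}
    (h : 1 + ⟪gradient f z, z⟫ ≠ 0) (hp : p = -(1 + ⟪gradient f z, z⟫)⁻¹ • gradient f z) :
    (1 + innerSL ℝ p z) • fderiv ℝ f z + innerSL ℝ p = 0 := by
  ext v
  rw [innerSL_apply_apply, hp, one_add_inner_neg_inv_smul h, ← toDual_gradient]
  simp

theorem stmt_14_general {n : ℕ} (X : Set (EuclideanSpace ℝ (Fin n)))
    (hX : IsRegularConvex X) (γ : ℝ)
    (f : EuclideanSpace ℝ (Fin n) → ℝ) (hf : IsPSCBarrier X f γ) :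
    Set.InjOn (fun x => -(1 + (inner ℝ (gradient f x) x : ℝ))⁻¹ • gradient f x)
      {x ∈ interior X | 0 < 1 + (inner ℝ (gradient f x) x : ℝ)} := by
  rintro x ⟨hxX, hx⟩ y ⟨hyX, hy⟩ hxy
  set p := -(1 + ⟪gradient f x, x⟫)⁻¹ • gradient f x with hpx
  have hpy : p = -(1 + ⟪gradient f y, y⟫)⁻¹ • gradient f y := hxy
  have hpos_at {z : EuclideanSpace ℝ (Fin n)} (hz : 0 < 1 + ⟪gradient f z, z⟫)
      (hp : p = -(1 + ⟪gradient f z, z⟫)⁻¹ • gradient f z) : 0 < 1 + innerSL ℝ p z := by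
    rw [innerSL_apply_apply, hp, one_add_inner_neg_inv_smul hz.ne']
    exact inv_pos.mpr hz
  exact eq_of_smul_fderiv_add_eq_zero isOpen_interior hX.2.1.interior
    (hf.1.of_le (by norm_num)) hf.2.1 (innerSL ℝ p) hxX hyX (hpos_at hx hpx) (hpos_at hy hpy)
    (smul_fderiv_add_innerSL_eq_zero hx.ne' hpx) (smul_fderiv_add_innerSL_eq_zero hy.ne' hpy)

theorem stmt_14 {n : ℕ} (X : Set (EuclideanSpace ℝ (Fin n)))
    (hX : IsRegularConvex X) (γ : ℝ)
    (f : EuclideanSpace ℝ (Fin n) → ℝ) (hf : IsPSCBarrier X f γ)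
    (hgrad : ∀ x ∈ interior X, ∀ y ∈ interior X, (inner ℝ (gradient f x) (y - x) : ℝ) < 1) :
    Set.InjOn (fun x => -(1 + (inner ℝ (gradient f x) x : ℝ))⁻¹ • gradient f x)
      {x ∈ interior X | 0 < 1 + (inner ℝ (gradient f x) x : ℝ)} :=
  stmt_14_general X hX γ f hf
end

section
/- Let ν₁, ν₂ ≥ 2, let X₁ ⊂ ℝ^{n₁}, X₂ ⊂ ℝ^{n₂} be regular convex sets, and let fᵢ be projectively self-concordant barriers on Xᵢ with parameters γᵢ = (νᵢ−2)/√(νᵢ−1). Then f(x,y) = (ν₁f₁(x) + ν₂f₂(y))/(ν₁+ν₂) is a projectively self-concordant barrier on X₁ × X₂ with parameter γ = (ν₁+ν₂−2)/√(ν₁+ν₂−1). -/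
open Filter

variable {E : Type*} [NormedAddCommGroup E] [NormedSpace ℝ E]

/-! A projective self-concordance bound with parameter `(ν - 2)/√(ν - 1)` for `f` in a direction `h`
is equivalent to affine self-concordance, `|F'''| ≤ 2 F''^{3/2}`, of the homogenization
`F = ν (-log t + f(x/t))` along all directions `(h + u x, u)`, `u ∈ ℝ`. These derivatives of `F` are
linear in the jet `(f'[h], f''[h,h], f'''[h,h,h])`, so for `(ν₁ f₁ + ν₂ f₂)/(ν₁ + ν₂)` they are the
sums of those of `ν₁ f₁` and `ν₂ f₂`; superadditivity of `x ↦ x^{3/2}` then yields the bound with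
`ν₁ + ν₂`. Smoothness, positivity of the metric and the barrier property pass to the product
directly.
-/

theorem le_two_mul_rpow_three_halves_iff {x Q : ℝ} (hx : 0 ≤ x) (hQ : 0 ≤ Q) :
    x ≤ 2 * Q ^ ((3:ℝ)/2) ↔ x^2 ≤ 4 * Q^3 := by
  rw [Real.rpow_div_two_eq_sqrt _ hQ, Real.rpow_ofNat,
    ← pow_le_pow_iff_left₀ hx (by positivity) two_ne_zero, mul_pow, ← pow_mul,
    show 3 * 2 = 2 * 3 by rfl, pow_mul, Real.sq_sqrt hQ]
  norm_num

theorem sq_abs_shiftedCubic_le {r p C : ℝ} (hr : 1 ≤ r) (hp : 0 ≤ p)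
    (hC : r * |C| ≤ 2 * (r^2 - 1) * p^3) (s : ℝ) :
    ((r^2 + 1) * |C - 6*s*p^2 - 2*s^3|)^2 ≤ 4 * ((r^2 + 1) * (p^2 + s^2))^3 := by
  obtain ⟨t, ht, hst, habs⟩ : ∃ t, 0 ≤ t ∧ s^2 = t^2 ∧
      |C - 6*s*p^2 - 2*s^3| ≤ |C| + 6*t*p^2 + 2*t^3 :=
    ⟨|s|, abs_nonneg s, (sq_abs s).symm, by
      calc |C - 6*s*p^2 - 2*s^3| ≤ |C| + |6*s*p^2| + |2*s^3| :=
            (abs_sub _ _).trans (add_le_add_left (abs_sub _ _) _)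
        _ = |C| + 6 * |s| * p^2 + 2 * |s|^3 := by
            simp only [abs_mul, abs_pow, abs_of_nonneg hp, abs_two,
              abs_of_pos (by norm_num : (0:ℝ) < 6)]⟩
  set L := (r^2 - 1)*p^3 + 3*r*t*p^2 + r*t^3
  have hr0 : 0 ≤ r := by linarith
  have hXL : r * |C - 6*s*p^2 - 2*s^3| ≤ 2 * L := by nlinarith
  -- `r²(r²+1)(p²+t²)³ - L² = (p - rt)² Q`, and `Q ≥ 0` because `r ≥ 1`
  have hL : L^2 ≤ r^2 * (r^2 + 1) * (p^2 + t^2)^3 := by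
    have hQ : 0 ≤ r^2*(t^4 + 3*p^2*t^2 + 3*p^4) + 2*p*t*r*(t^2 + 2*p^2) - p^4 := by
      have hr2 : 1 ≤ r^2 := one_le_pow₀ hr
      have : 0 ≤ 2*p*t*r*(t^2 + 2*p^2) := by positivity
      nlinarith [mul_le_mul_of_nonneg_right hr2 (by positivity : (0:ℝ) ≤ 3*p^4),
        mul_nonneg (sq_nonneg r) (by positivity : (0:ℝ) ≤ t^4 + 3*p^2*t^2)]
    nlinarith [mul_nonneg (sq_nonneg (p - r*t)) hQ]
  have hsq := pow_le_pow_left₀ (by positivity) hXL 2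
  rw [hst]
  refine le_of_mul_le_mul_left ?_ (by positivity : (0:ℝ) < r^2)
  nlinarith [mul_le_mul_of_nonneg_left hL (by positivity : (0:ℝ) ≤ 4 * (r^2 + 1)^2)]

theorem abs_le_of_forall_sq_abs_shiftedCubic_le {r p C : ℝ} (hr : 0 < r) (hp : 0 ≤ p)
    (h : ∀ s, ((r^2 + 1) * |C - 6*s*p^2 - 2*s^3|)^2 ≤ 4 * ((r^2 + 1) * (p^2 + s^2))^3) :
    r * |C| ≤ 2 * (r^2 - 1) * p^3 := by
  -- the shifts `s = ±p/r` are extremal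
  obtain ⟨s, hs, rfl⟩ : ∃ s, 0 ≤ s ∧ p = r * s := ⟨p / r, by positivity, by field_simp⟩
  have hbound : ∀ σ, σ^2 = s^2 → |C - 6*σ*(r*s)^2 - 2*σ^3| ≤ 2 * (r^2 + 1)^2 * s^3 := by
    intro σ hσ
    refine abs_le_of_sq_le_sq ?_ (by positivity)
    refine le_of_mul_le_mul_left ?_ (by positivity : (0:ℝ) < (r^2 + 1)^2)
    have := h σ
    rw [hσ, mul_pow, sq_abs] at this
    nlinarith [this]
  have hpos := abs_le.1 (hbound s rfl)
  have hneg := abs_le.1 (hbound (-s) (neg_sq s))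
  have : |C| ≤ 2 * r^2 * (r^2 - 1) * s^3 := abs_le.2 ⟨by nlinarith, by nlinarith⟩
  nlinarith [mul_le_mul_of_nonneg_left this hr.le]

/-- With `a = f'(x)[h]`, `S = f''(x)[h,h]`, `T = f'''(x)[h,h,h]`, `homQuad` and `homCubic` are the
second and third derivatives of `-log t + f(y/t)` at `(x, 1)` in the direction `(h + u x, u)`;
`ConicBound ν a S T` is affine self-concordance of `ν (-log t + f(y/t))` along all these
directions. -/
def homQuad (a S u : ℝ) : ℝ := S - 2*u*a + u^2

def homCubic (a S T u : ℝ) : ℝ := T - 6*u*S + 6*u^2*a - 2*u^3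

def ConicBound (ν a S T : ℝ) : Prop :=
  ∀ u, ν * |homCubic a S T u| ≤ 2 * (ν * homQuad a S u) ^ ((3:ℝ)/2)

theorem homQuad_eq (a S u : ℝ) : homQuad a S u = (S - a^2) + (u - a)^2 := by
  unfold homQuad; ring

theorem homQuad_nonneg {a S : ℝ} (hG : 0 ≤ S - a^2) (u : ℝ) : 0 ≤ homQuad a S u := by
  rw [homQuad_eq]; positivity

theorem homCubic_add (a S T s : ℝ) :
    homCubic a S T (a + s) = (T - 6*S*a + 4*a^3) - 6*s*(S - a^2) - 2*s^3 := by
  unfold homCubic; ring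

theorem conicBound_iff {ν a S T : ℝ} (hν : 2 ≤ ν) (hG : 0 ≤ S - a^2) :
    ConicBound ν a S T ↔
      |T - 6*S*a + 4*a^3| ≤ 2 * ((ν - 2) / √(ν - 1)) * (S - a^2) ^ ((3:ℝ)/2) := by
  obtain ⟨r, hr, rfl⟩ : ∃ r, 1 ≤ r ∧ ν = r^2 + 1 :=
    ⟨√(ν - 1), Real.one_le_sqrt.2 (by linarith), by rw [Real.sq_sqrt (by linarith)]; ring⟩
  obtain ⟨p, hp, hpG⟩ : ∃ p, 0 ≤ p ∧ S - a^2 = p^2 :=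
    ⟨√(S - a^2), Real.sqrt_nonneg _, (Real.sq_sqrt hG).symm⟩
  set C := T - 6*S*a + 4*a^3
  have hr0 : 0 < r := by linarith
  have hshift : ∀ s, (r^2 + 1) * |homCubic a S T (a + s)|
      ≤ 2 * ((r^2 + 1) * homQuad a S (a + s)) ^ ((3:ℝ)/2) ↔
      ((r^2 + 1) * |C - 6*s*p^2 - 2*s^3|)^2 ≤ 4 * ((r^2 + 1) * (p^2 + s^2))^3 := by
    intro s
    rw [homCubic_add, homQuad_eq, hpG, add_sub_cancel_left]
    exact le_two_mul_rpow_three_halves_iff (by positivity) (by positivity)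
  have hγ : (r^2 + 1 - 2) / √(r^2 + 1 - 1) * (p^2) ^ ((3:ℝ)/2) = (r^2 - 1) / r * p^3 := by
    rw [add_sub_cancel_right, Real.sqrt_sq hr0.le, Real.rpow_div_two_eq_sqrt _ (by positivity),
      Real.rpow_ofNat, Real.sqrt_sq hp]
    ring
  rw [hpG, mul_assoc, hγ, ← mul_assoc, mul_div_assoc', div_mul_eq_mul_div, le_div_iff₀ hr0,
    mul_comm |C|]
  constructor
  · intro h
    exact abs_le_of_forall_sq_abs_shiftedCubic_le hr0 hp fun s => (hshift s).1 (h (a + s))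
  · intro h u
    simpa using (hshift (u - a)).2 (sq_abs_shiftedCubic_le hr hp h (u - a))

section WeightedAverage

variable {ν₁ ν₂ a₁ a₂ S₁ S₂ T₁ T₂ : ℝ}

theorem homQuad_weightedAvg (hν : ν₁ + ν₂ ≠ 0) (u : ℝ) :
    (ν₁ + ν₂) * homQuad (ν₁/(ν₁+ν₂) * a₁ + ν₂/(ν₁+ν₂) * a₂) (ν₁/(ν₁+ν₂) * S₁ + ν₂/(ν₁+ν₂) * S₂) u
      = ν₁ * homQuad a₁ S₁ u + ν₂ * homQuad a₂ S₂ u := by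
  unfold homQuad; field_simp; ring

theorem homCubic_weightedAvg (hν : ν₁ + ν₂ ≠ 0) (u : ℝ) :
    (ν₁ + ν₂) * homCubic (ν₁/(ν₁+ν₂) * a₁ + ν₂/(ν₁+ν₂) * a₂) (ν₁/(ν₁+ν₂) * S₁ + ν₂/(ν₁+ν₂) * S₂)
        (ν₁/(ν₁+ν₂) * T₁ + ν₂/(ν₁+ν₂) * T₂) u
      = ν₁ * homCubic a₁ S₁ T₁ u + ν₂ * homCubic a₂ S₂ T₂ u := by
  unfold homCubic; field_simp; ring

theorem weightedAvg_sub_sq_ge (hν₁ : 0 ≤ ν₁) (hν₂ : 0 ≤ ν₂) (hν : ν₁ + ν₂ ≠ 0) :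
    ν₁ * (S₁ - a₁^2) + ν₂ * (S₂ - a₂^2) ≤
      (ν₁ + ν₂) *
        ((ν₁/(ν₁+ν₂) * S₁ + ν₂/(ν₁+ν₂) * S₂) - (ν₁/(ν₁+ν₂) * a₁ + ν₂/(ν₁+ν₂) * a₂)^2) := by
  set ā := ν₁/(ν₁+ν₂) * a₁ + ν₂/(ν₁+ν₂) * a₂
  have hself : ∀ a S, S - a^2 = homQuad a S a := fun a S => by rw [homQuad_eq, sub_self]; ring
  rw [hself ā, homQuad_weightedAvg hν, homQuad_eq a₁, homQuad_eq a₂]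
  nlinarith [mul_nonneg hν₁ (sq_nonneg (ā - a₁)), mul_nonneg hν₂ (sq_nonneg (ā - a₂))]

theorem ConicBound.weightedAvg (hν₁ : 0 ≤ ν₁) (hν₂ : 0 ≤ ν₂) (hν : 0 < ν₁ + ν₂)
    (hG₁ : 0 ≤ S₁ - a₁^2) (hG₂ : 0 ≤ S₂ - a₂^2)
    (h₁ : ConicBound ν₁ a₁ S₁ T₁) (h₂ : ConicBound ν₂ a₂ S₂ T₂) :
    ConicBound (ν₁ + ν₂) (ν₁/(ν₁+ν₂) * a₁ + ν₂/(ν₁+ν₂) * a₂)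
      (ν₁/(ν₁+ν₂) * S₁ + ν₂/(ν₁+ν₂) * S₂) (ν₁/(ν₁+ν₂) * T₁ + ν₂/(ν₁+ν₂) * T₂) := by
  intro u
  have hQ₁ := mul_nonneg hν₁ (homQuad_nonneg hG₁ u)
  have hQ₂ := mul_nonneg hν₂ (homQuad_nonneg hG₂ u)
  calc _ = |ν₁ * homCubic a₁ S₁ T₁ u + ν₂ * homCubic a₂ S₂ T₂ u| := by
        rw [← homCubic_weightedAvg hν.ne', abs_mul, abs_of_pos hν]
    _ ≤ ν₁ * |homCubic a₁ S₁ T₁ u| + ν₂ * |homCubic a₂ S₂ T₂ u| :=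
        (abs_add_le _ _).trans_eq (by rw [abs_mul, abs_mul, abs_of_nonneg hν₁, abs_of_nonneg hν₂])
    _ ≤ 2 * (ν₁ * homQuad a₁ S₁ u) ^ ((3:ℝ)/2) + 2 * (ν₂ * homQuad a₂ S₂ u) ^ ((3:ℝ)/2) :=
        add_le_add (h₁ u) (h₂ u)
    _ ≤ 2 * (ν₁ * homQuad a₁ S₁ u + ν₂ * homQuad a₂ S₂ u) ^ ((3:ℝ)/2) := by
        rw [← mul_add]
        gcongr
        exact Real.add_rpow_le_rpow_add hQ₁ hQ₂ (by norm_num)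
    _ = _ := by rw [homQuad_weightedAvg hν.ne']

end WeightedAverage

theorem affMetric_zero (f : E → ℝ) (x : E) : affMetric f x 0 = 0 := by
  rw [affMetric, ContinuousMultilinearMap.map_coord_zero _ (0 : Fin 2) rfl, map_zero]
  ring

theorem affMetric_nonneg_of_pos {f : E → ℝ} {x : E}
    (hpos : ∀ h : E, h ≠ 0 → 0 < affMetric f x h) (h : E) : 0 ≤ affMetric f x h := by
  rcases eq_or_ne h 0 with rfl | hh
  · rw [affMetric_zero]
  · exact (hpos h hh).le

theorem exists_eventually_ge_of_mem_closure {α : Type*} [TopologicalSpace α] {X : Set α}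
    {f : α → ℝ} (hf : ContinuousOn f (interior X))
    (hbar : ∀ x ∈ frontier X, Tendsto f (nhdsWithin x (interior X)) atTop)
    {x : α} (hx : x ∈ closure X) :
    ∃ c, ∀ᶠ w in nhdsWithin x (interior X), c ≤ f w := by
  rw [closure_eq_interior_union_frontier] at hx
  rcases hx with hx | hx
  · have hlim : Tendsto f (nhdsWithin x (interior X)) (nhds (f x)) :=
      (hf.continuousAt (isOpen_interior.mem_nhds hx)).tendsto.mono_left nhdsWithin_le_nhds
    exact ⟨f x - 1, hlim.eventually (eventually_ge_nhds (by linarith))⟩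
  · exact ⟨0, (hbar x hx).eventually_ge_atTop 0⟩

theorem tendsto_prod_add_atTop {α β : Type*} {l₁ : Filter α} {l₂ : Filter β}
    {g₁ : α → ℝ} {g₂ : β → ℝ} (hb₁ : ∃ c, ∀ᶠ x in l₁, c ≤ g₁ x) (hb₂ : ∃ c, ∀ᶠ y in l₂, c ≤ g₂ y)
    (h : Tendsto g₁ l₁ atTop ∨ Tendsto g₂ l₂ atTop) :
    Tendsto (fun w : α × β => g₁ w.1 + g₂ w.2) (l₁ ×ˢ l₂) atTop := by
  obtain ⟨c₁, hc₁⟩ := hb₁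
  obtain ⟨c₂, hc₂⟩ := hb₂
  rcases h with h | h
  · exact tendsto_atTop_add_right_of_le' _ c₂ (h.comp tendsto_fst) (tendsto_snd.eventually hc₂)
  · exact tendsto_atTop_add_left_of_le' _ c₁ (tendsto_fst.eventually hc₁) (h.comp tendsto_snd)

theorem tendsto_prod_add_atTop_of_mem_frontier {α β : Type*} [TopologicalSpace α]
    [TopologicalSpace β] {X₁ : Set α} {X₂ : Set β} {g₁ : α → ℝ} {g₂ : β → ℝ}
    (hg₁ : ContinuousOn g₁ (interior X₁)) (hg₂ : ContinuousOn g₂ (interior X₂))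
    (hbar₁ : ∀ x ∈ frontier X₁, Tendsto g₁ (nhdsWithin x (interior X₁)) atTop)
    (hbar₂ : ∀ y ∈ frontier X₂, Tendsto g₂ (nhdsWithin y (interior X₂)) atTop)
    {z : α × β} (hz : z ∈ frontier (X₁ ×ˢ X₂)) :
    Tendsto (fun w : α × β => g₁ w.1 + g₂ w.2) (nhdsWithin z (interior (X₁ ×ˢ X₂))) atTop := by
  obtain ⟨x, y⟩ := z
  rw [interior_prod_eq, nhdsWithin_prod_eq]
  rw [frontier_prod_eq] at hz
  rcases hz with ⟨hx, hy⟩ | ⟨hx, hy⟩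
  · exact tendsto_prod_add_atTop (exists_eventually_ge_of_mem_closure hg₁ hbar₁ hx)
      (exists_eventually_ge_of_mem_closure hg₂ hbar₂ (frontier_subset_closure hy))
      (Or.inr (hbar₂ y hy))
  · exact tendsto_prod_add_atTop (exists_eventually_ge_of_mem_closure hg₁ hbar₁
      (frontier_subset_closure hx)) (exists_eventually_ge_of_mem_closure hg₂ hbar₂ hy)
      (Or.inl (hbar₁ x hx))

section Product

variable {E₁ E₂ F : Type*} [NormedAddCommGroup E₁] [NormedSpace ℝ E₁]
  [NormedAddCommGroup E₂] [NormedSpace ℝ E₂] [NormedAddCommGroup F] [NormedSpace ℝ F]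

theorem iteratedFDeriv_comp_clm_apply {U : Set E₁} (hU : IsOpen U) {f : E₁ → ℝ} {n : ℕ}
    (hf : ContDiffOn ℝ n f U) (L : F →L[ℝ] E₁) {x : F} (hx : L x ∈ U) (h : F) :
    iteratedFDeriv ℝ n (f ∘ L) x (fun _ => h) = iteratedFDeriv ℝ n f (L x) (fun _ => L h) := by
  have hU' : IsOpen (L ⁻¹' U) := hU.preimage L.continuous
  rw [← iteratedFDerivWithin_of_isOpen n hU' hx, ← iteratedFDerivWithin_of_isOpen n hU hx,
    L.iteratedFDerivWithin_comp_right hf hU.uniqueDiffOn hU'.uniqueDiffOn hx le_rfl]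
  rfl

variable {U₁ : Set E₁} {U₂ : Set E₂} {f₁ : E₁ → ℝ} {f₂ : E₂ → ℝ} {z : E₁ × E₂}

theorem iteratedFDeriv_weightedSum_apply (hU₁ : IsOpen U₁) (hU₂ : IsOpen U₂) {n : ℕ}
    (hf₁ : ContDiffOn ℝ n f₁ U₁) (hf₂ : ContDiffOn ℝ n f₂ U₂) (c₁ c₂ : ℝ)
    (hz : z ∈ U₁ ×ˢ U₂) (h : E₁ × E₂) :
    iteratedFDeriv ℝ n (fun w => c₁ * f₁ w.1 + c₂ * f₂ w.2) z (fun _ => h) =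
      c₁ * iteratedFDeriv ℝ n f₁ z.1 (fun _ => h.1)
        + c₂ * iteratedFDeriv ℝ n f₂ z.2 (fun _ => h.2) := by
  have hd₁ : ContDiffAt ℝ n (f₁ ∘ ContinuousLinearMap.fst ℝ E₁ E₂) z :=
    (hf₁.contDiffAt (hU₁.mem_nhds hz.1)).comp z contDiffAt_fst
  have hd₂ : ContDiffAt ℝ n (f₂ ∘ ContinuousLinearMap.snd ℝ E₁ E₂) z :=
    (hf₂.contDiffAt (hU₂.mem_nhds hz.2)).comp z contDiffAt_snd
  have hs₁ : ContDiffAt ℝ n (c₁ • (f₁ ∘ ContinuousLinearMap.fst ℝ E₁ E₂)) z := hd₁.const_smul c₁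
  have hs₂ : ContDiffAt ℝ n (c₂ • (f₂ ∘ ContinuousLinearMap.snd ℝ E₁ E₂)) z := hd₂.const_smul c₂
  change iteratedFDeriv ℝ n (c₁ • (f₁ ∘ ContinuousLinearMap.fst ℝ E₁ E₂)
    + c₂ • (f₂ ∘ ContinuousLinearMap.snd ℝ E₁ E₂)) z (fun _ => h) = _
  rw [iteratedFDeriv_add_apply hs₁ hs₂, iteratedFDeriv_const_smul_apply hd₁,
    iteratedFDeriv_const_smul_apply hd₂]
  simp only [add_apply, smul_apply, smul_eq_mul]
  rw [iteratedFDeriv_comp_clm_apply hU₁ hf₁ _ hz.1, iteratedFDeriv_comp_clm_apply hU₂ hf₂ _ hz.2]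
  rfl

theorem fderiv_weightedSum_apply (hU₁ : IsOpen U₁) (hU₂ : IsOpen U₂)
    (hf₁ : ContDiffOn ℝ 1 f₁ U₁) (hf₂ : ContDiffOn ℝ 1 f₂ U₂) (c₁ c₂ : ℝ)
    (hz : z ∈ U₁ ×ˢ U₂) (h : E₁ × E₂) :
    fderiv ℝ (fun w => c₁ * f₁ w.1 + c₂ * f₂ w.2) z h =
      c₁ * fderiv ℝ f₁ z.1 h.1 + c₂ * fderiv ℝ f₂ z.2 h.2 := by
  simpa [iteratedFDeriv_one_apply] using
    iteratedFDeriv_weightedSum_apply (n := 1) hU₁ hU₂ hf₁ hf₂ c₁ c₂ hz h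

variable {ν₁ ν₂ : ℝ}

theorem affMetric_weightedSum_pos (hU₁ : IsOpen U₁) (hU₂ : IsOpen U₂)
    (hf₁ : ContDiffOn ℝ 2 f₁ U₁) (hf₂ : ContDiffOn ℝ 2 f₂ U₂) (hν₁ : 0 < ν₁) (hν₂ : 0 < ν₂)
    (hz : z ∈ U₁ ×ˢ U₂) {h : E₁ × E₂}
    (hG₁ : 0 ≤ affMetric f₁ z.1 h.1) (hG₂ : 0 ≤ affMetric f₂ z.2 h.2)
    (hpos : 0 < affMetric f₁ z.1 h.1 ∨ 0 < affMetric f₂ z.2 h.2) :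
    0 < affMetric (fun w => ν₁/(ν₁+ν₂) * f₁ w.1 + ν₂/(ν₁+ν₂) * f₂ w.2) z h := by
  unfold affMetric at *
  rw [iteratedFDeriv_weightedSum_apply hU₁ hU₂ hf₁ hf₂ _ _ hz,
    fderiv_weightedSum_apply hU₁ hU₂ (hf₁.of_le one_le_two) (hf₂.of_le one_le_two) _ _ hz]
  have hν : 0 < ν₁ + ν₂ := by linarith
  refine pos_of_mul_pos_right ?_ hν.le
  refine lt_of_lt_of_le ?_ (weightedAvg_sub_sq_ge hν₁.le hν₂.le hν.ne')
  rcases hpos with hpos | hpos <;> positivity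

theorem abs_cubicForm_weightedSum_le (hU₁ : IsOpen U₁) (hU₂ : IsOpen U₂)
    (hf₁ : ContDiffOn ℝ 3 f₁ U₁) (hf₂ : ContDiffOn ℝ 3 f₂ U₂) (hν₁ : 2 ≤ ν₁) (hν₂ : 2 ≤ ν₂)
    (hz : z ∈ U₁ ×ˢ U₂) {h : E₁ × E₂}
    (hG₁ : 0 ≤ affMetric f₁ z.1 h.1) (hG₂ : 0 ≤ affMetric f₂ z.2 h.2)
    (hC₁ : |cubicForm f₁ z.1 h.1|
      ≤ 2 * ((ν₁ - 2) / √(ν₁ - 1)) * affMetric f₁ z.1 h.1 ^ ((3:ℝ)/2))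
    (hC₂ : |cubicForm f₂ z.2 h.2|
      ≤ 2 * ((ν₂ - 2) / √(ν₂ - 1)) * affMetric f₂ z.2 h.2 ^ ((3:ℝ)/2)) :
    |cubicForm (fun w => ν₁/(ν₁+ν₂) * f₁ w.1 + ν₂/(ν₁+ν₂) * f₂ w.2) z h|
      ≤ 2 * ((ν₁ + ν₂ - 2) / √(ν₁ + ν₂ - 1))
        * affMetric (fun w => ν₁/(ν₁+ν₂) * f₁ w.1 + ν₂/(ν₁+ν₂) * f₂ w.2) z h ^ ((3:ℝ)/2) := by
  unfold cubicForm affMetric at *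
  rw [iteratedFDeriv_weightedSum_apply hU₁ hU₂ hf₁ hf₂ _ _ hz,
    iteratedFDeriv_weightedSum_apply hU₁ hU₂ (hf₁.of_le (by norm_num)) (hf₂.of_le (by norm_num))
      _ _ hz,
    fderiv_weightedSum_apply hU₁ hU₂ (hf₁.of_le (by norm_num)) (hf₂.of_le (by norm_num)) _ _ hz]
  have hν : 0 < ν₁ + ν₂ := by linarith
  refine (conicBound_iff (by linarith) ?_).1 <|
    ((conicBound_iff hν₁ hG₁).2 hC₁).weightedAvg (by linarith) (by linarith) hν hG₁ hG₂
      ((conicBound_iff hν₂ hG₂).2 hC₂)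
  exact nonneg_of_mul_nonneg_right
    ((add_nonneg (mul_nonneg (by linarith) hG₁) (mul_nonneg (by linarith) hG₂)).trans
      (weightedAvg_sub_sq_ge (by linarith) (by linarith) hν.ne')) hν

end Product

theorem stmt_15_general {n₁ n₂ : ℕ} (ν₁ ν₂ : ℝ) (hν₁ : 2 ≤ ν₁) (hν₂ : 2 ≤ ν₂)
    (X₁ : Set (EuclideanSpace ℝ (Fin n₁))) (X₂ : Set (EuclideanSpace ℝ (Fin n₂)))
    (f₁ : EuclideanSpace ℝ (Fin n₁) → ℝ) (f₂ : EuclideanSpace ℝ (Fin n₂) → ℝ)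
    (hf₁ : IsPSCBarrier X₁ f₁ ((ν₁ - 2)/Real.sqrt (ν₁ - 1)))
    (hf₂ : IsPSCBarrier X₂ f₂ ((ν₂ - 2)/Real.sqrt (ν₂ - 1))) :
    IsPSCBarrier (X₁ ×ˢ X₂)
      (fun z => (ν₁ * f₁ z.1 + ν₂ * f₂ z.2) / (ν₁ + ν₂))
      ((ν₁ + ν₂ - 2)/Real.sqrt (ν₁ + ν₂ - 1)) := by
  obtain ⟨hf₁s, hf₁pos, hf₁bar, hf₁sc⟩ := hf₁
  obtain ⟨hf₂s, hf₂pos, hf₂bar, hf₂sc⟩ := hf₂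
  have hc₁ : 0 < ν₁ / (ν₁ + ν₂) := div_pos (by linarith) (by linarith)
  have hc₂ : 0 < ν₂ / (ν₁ + ν₂) := div_pos (by linarith) (by linarith)
  have hG₁ := fun x hx => affMetric_nonneg_of_pos (hf₁pos x hx)
  have hG₂ := fun x hx => affMetric_nonneg_of_pos (hf₂pos x hx)
  have hsum : (fun z : _ × _ => (ν₁ * f₁ z.1 + ν₂ * f₂ z.2) / (ν₁ + ν₂)) =
      fun z => ν₁ / (ν₁ + ν₂) * f₁ z.1 + ν₂ / (ν₁ + ν₂) * f₂ z.2 := by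
    funext z
    rw [add_div, mul_div_right_comm, mul_div_right_comm]
  rw [hsum]
  refine ⟨?_, fun z hz h hh => ?_, fun z hz => ?_, fun z hz h => ?_⟩
  · rw [interior_prod_eq]
    exact (contDiffOn_const.mul (hf₁s.comp contDiffOn_fst Set.mapsTo_fst_prod)).add
      (contDiffOn_const.mul (hf₂s.comp contDiffOn_snd Set.mapsTo_snd_prod))
  · rw [interior_prod_eq] at hz
    have hh' : h.1 ≠ 0 ∨ h.2 ≠ 0 := by
      contrapose! hh
      exact Prod.ext hh.1 hh.2
    exact affMetric_weightedSum_pos isOpen_interior isOpen_interior (hf₁s.of_le (by norm_num))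
      (hf₂s.of_le (by norm_num)) (by linarith) (by linarith) hz (hG₁ _ hz.1 _) (hG₂ _ hz.2 _)
      (hh'.imp (hf₁pos _ hz.1 _) (hf₂pos _ hz.2 _))
  · exact tendsto_prod_add_atTop_of_mem_frontier (continuousOn_const.mul hf₁s.continuousOn)
      (continuousOn_const.mul hf₂s.continuousOn)
      (fun x hx => (hf₁bar x hx).const_mul_atTop hc₁)
      (fun y hy => (hf₂bar y hy).const_mul_atTop hc₂)
      hz
  · rw [interior_prod_eq] at hz
    exact abs_cubicForm_weightedSum_le isOpen_interior isOpen_interior hf₁s hf₂s hν₁ hν₂ hz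
      (hG₁ _ hz.1 _) (hG₂ _ hz.2 _) (hf₁sc _ hz.1 _) (hf₂sc _ hz.2 _)

theorem stmt_15 {n₁ n₂ : ℕ} (ν₁ ν₂ : ℝ) (hν₁ : 2 ≤ ν₁) (hν₂ : 2 ≤ ν₂)
    (X₁ : Set (EuclideanSpace ℝ (Fin n₁))) (X₂ : Set (EuclideanSpace ℝ (Fin n₂)))
    (hX₁ : IsRegularConvex X₁) (hX₂ : IsRegularConvex X₂)
    (f₁ : EuclideanSpace ℝ (Fin n₁) → ℝ) (f₂ : EuclideanSpace ℝ (Fin n₂) → ℝ)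
    (hf₁ : IsPSCBarrier X₁ f₁ ((ν₁ - 2)/Real.sqrt (ν₁ - 1)))
    (hf₂ : IsPSCBarrier X₂ f₂ ((ν₂ - 2)/Real.sqrt (ν₂ - 1))) :
    IsPSCBarrier (X₁ ×ˢ X₂)
      (fun z => (ν₁ * f₁ z.1 + ν₂ * f₂ z.2) / (ν₁ + ν₂))
      ((ν₁ + ν₂ - 2)/Real.sqrt (ν₁ + ν₂ - 1)) :=
  stmt_15_general ν₁ ν₂ hν₁ hν₂ X₁ X₂ f₁ f₂ hf₁ hf₂
end

section
/- Let 0 ≤ λ̄ < 1 and consider the two-dimensional controlled system Δ_f' = −1 + Δ_f·u, Δ_m' = −1 − Δ_m·u with measurable control u(t) ∈ [−1,1], initial conditions Δ_f(0) = Δ_m(0) = λ̄, on [0,T] with Δ_f(T) = 0. Then |Δ_m(T)| ≤ 4 − λ̄² − 4√(1 − λ̄²), and this bound is attained. -/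
/-!
Write `S = Δf + Δm`, `P = (1 - Δm)(1 + Δf)` and `Q = (1 + Δm)(1 - Δf)`; along a trajectory
`P' = S (1 + u)` and `Q' = S (1 - u)`. Comparison arguments for `x' = -1 + x v`, `|v| ≤ 1`, give
`0 ≤ Δf ≤ λ̄`, hence `Δf` is decreasing, and show that `Δm` stays nonpositive once it is.

If `Δm(T) > 0`, then `S ≥ 0` throughout, so `P` increases and `1 - Δm(T) = P(T) ≥ P(0) = 1 - λ̄²`.
If `Δm(T) < 0`, let `σ` be the first time with `S ≤ 0` and `τ ≥ σ` the last time with `S ≥ 0`.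
Then `Q` increases on `[0, σ]` and `P` decreases on `[τ, T]`, which gives
`√(1 - λ̄²) ≤ 1 - Δf(σ)` and `1 - Δm(T) ≤ (1 + Δf(τ))² ≤ (1 + Δf(σ))² ≤ (2 - √(1 - λ̄²))²`.
Equality is attained by the control `u = 1` until `Δf = -Δm`, then `u = -1` until `Δf = 0`.
-/

/-- The controlled system `Δf' = -1 + Δf·u`, `Δm' = -1 - Δm·u` with control `u(t) ∈ [-1,1]`,
formulated for absolutely continuous trajectories: continuous on `[0,T]` and differentiable
with the prescribed derivatives outside a countable exceptional set. -/
def IsTrajectory (T lam : ℝ) (Δf Δm u : ℝ → ℝ) : Prop :=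
  0 ≤ T ∧
  ContinuousOn Δf (Set.Icc 0 T) ∧ ContinuousOn Δm (Set.Icc 0 T) ∧
  (∀ t ∈ Set.Icc 0 T, u t ∈ Set.Icc (-1:ℝ) 1) ∧
  (∃ s : Set ℝ, s.Countable ∧
    (∀ t ∈ Set.Ioo 0 T \ s, HasDerivAt Δf (-1 + Δf t * u t) t) ∧
    (∀ t ∈ Set.Ioo 0 T \ s, HasDerivAt Δm (-1 - Δm t * u t) t)) ∧
  Δf 0 = lam ∧ Δm 0 = lam ∧ Δf T = 0

open Set Filter Topology Real

theorem monotoneOn_of_hasDerivAt_nonneg_off_countable {φ φ' : ℝ → ℝ} {a b : ℝ} {s : Set ℝ}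
    (hs : s.Countable) (hφ : ContinuousOn φ (Icc a b))
    (hderiv : ∀ t ∈ Ioo a b \ s, HasDerivAt φ (φ' t) t)
    (hnonneg : ∀ t ∈ Ioo a b \ s, 0 ≤ φ' t) : MonotoneOn φ (Icc a b) := by
  intro x hx y hy hxy
  by_contra! hyx
  have hxy' : x < y := hxy.lt_of_ne (by rintro rfl; exact lt_irrefl _ hyx)
  -- Tilting `φ` by `ε t` makes the derivative positive off `s`; a level `v ∉ h '' s` is then
  -- crossed downwards for the last time at a point `c ∉ s`, which is impossible.
  set ε := (φ x - φ y) / (2 * (y - x)) with hε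
  have hε0 : 0 < ε := div_pos (by linarith) (by linarith)
  set h : ℝ → ℝ := fun t => φ t + ε * t with hh
  have hhxy : h y < h x := by
    have : ε * (y - x) = (φ x - φ y) / 2 := by
      rw [hε]; field_simp [sub_ne_zero.2 hxy'.ne']
    simp only [hh]; linarith
  obtain ⟨v, hv, hyv, hvx⟩ := ((hs.image h).dense_compl ℝ).exists_between hhxy
  have hcont : ContinuousOn h (Icc x y) :=
    (hφ.mono (Icc_subset_Icc hx.1 hy.2)).add (continuousOn_const.mul continuousOn_id)
  obtain ⟨c, ⟨hc, hvc⟩, hcmax⟩ : ∃ c, IsGreatest {t ∈ Icc x y | v ≤ h t} c :=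
    (isCompact_Icc.of_isClosed_subset
      (hcont.preimage_isClosed_of_isClosed isClosed_Icc isClosed_Ici)
      inter_subset_left).exists_isGreatest ⟨x, ⟨left_mem_Icc.2 hxy, hvx.le⟩⟩
  have hcv : h c = v := by
    refine le_antisymm ?_ hvc
    by_contra! hvc'
    obtain ⟨t, ht, htv⟩ := intermediate_value_Icc' hc.2
      (hcont.mono (Icc_subset_Icc hc.1 le_rfl)) ⟨hyv.le, hvc'.le⟩
    obtain rfl : t = c := le_antisymm (hcmax ⟨⟨hc.1.trans ht.1, ht.2⟩, htv.ge⟩) ht.1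
    exact hvc'.ne' htv
  have hxc : x < c := hc.1.lt_of_ne (by rintro rfl; linarith)
  have hcy : c < y := hc.2.lt_of_ne (by rintro rfl; linarith)
  have hcs : c ∈ Ioo a b \ s :=
    ⟨⟨hx.1.trans_lt hxc, hcy.trans_le hy.2⟩, fun hcs => hv ⟨c, hcs, hcv⟩⟩
  have hdc : HasDerivAt h (φ' c + ε) c :=
    ((hderiv c hcs).add ((hasDerivAt_id c).const_mul ε)).congr_deriv (by ring)
  have hslope : ∀ᶠ t in 𝓝[>] c, 0 < slope h c t :=
    ((hasDerivAt_iff_tendsto_slope.1 hdc).mono_left (nhdsGT_le_nhdsNE c)).eventually_const_lt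
      (by linarith [hnonneg c hcs])
  obtain ⟨t, hpos, hct, hty⟩ := (hslope.and (Ioc_mem_nhdsGT hcy)).exists
  rw [slope_pos_iff_of_le hct.le] at hpos
  have hvt : h t < v := not_le.1 fun hvt => (hcmax ⟨⟨hxc.le.trans hct.le, hty⟩, hvt⟩).not_gt hct
  linarith

theorem antitoneOn_of_hasDerivAt_nonpos_off_countable {φ φ' : ℝ → ℝ} {a b : ℝ} {s : Set ℝ}
    (hs : s.Countable) (hφ : ContinuousOn φ (Icc a b))
    (hderiv : ∀ t ∈ Ioo a b \ s, HasDerivAt φ (φ' t) t)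
    (hnonpos : ∀ t ∈ Ioo a b \ s, φ' t ≤ 0) : AntitoneOn φ (Icc a b) := fun _ hx _ hy hxy =>
  neg_le_neg_iff.1 <| monotoneOn_of_hasDerivAt_nonneg_off_countable (φ' := fun t => -φ' t) hs
    hφ.neg (fun t ht => (hderiv t ht).neg) (fun t ht => neg_nonneg.2 (hnonpos t ht)) hx hy hxy

theorem ContinuousOn.exists_last_nonpos {S : ℝ → ℝ} {a b : ℝ} (hS : ContinuousOn S (Icc a b))
    (hab : a ≤ b) (ha : S a ≤ 0) : ∃ r ∈ Icc a b, S r ≤ 0 ∧ ∀ t ∈ Ioc r b, 0 < S t := by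
  obtain ⟨r, ⟨hr, hSr⟩, hmax⟩ : ∃ r, IsGreatest {t ∈ Icc a b | S t ≤ 0} r :=
    (isCompact_Icc.of_isClosed_subset (hS.preimage_isClosed_of_isClosed isClosed_Icc isClosed_Iic)
      inter_subset_left).exists_isGreatest ⟨a, ⟨left_mem_Icc.2 hab, ha⟩⟩
  exact ⟨r, hr, hSr, fun t ht =>
    not_le.1 fun hSt => (hmax ⟨⟨hr.1.trans ht.1.le, ht.2⟩, hSt⟩).not_gt ht.1⟩

theorem ContinuousOn.exists_first_nonpos {S : ℝ → ℝ} {a b : ℝ} (hS : ContinuousOn S (Icc a b))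
    (hab : a ≤ b) (hb : S b ≤ 0) : ∃ r ∈ Icc a b, S r ≤ 0 ∧ ∀ t ∈ Ico a r, 0 < S t := by
  obtain ⟨r, ⟨hr, hSr⟩, hmin⟩ : ∃ r, IsLeast {t ∈ Icc a b | S t ≤ 0} r :=
    (isCompact_Icc.of_isClosed_subset (hS.preimage_isClosed_of_isClosed isClosed_Icc isClosed_Iic)
      inter_subset_left).exists_isLeast ⟨b, ⟨right_mem_Icc.2 hab, hb⟩⟩
  exact ⟨r, hr, hSr, fun t ht =>
    not_le.1 fun hSt => (hmin ⟨⟨ht.1, ht.2.le.trans hr.2⟩, hSt⟩).not_gt ht.2⟩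

theorem nonpos_of_nonpos_of_deriv_le_mul {g g' : ℝ → ℝ} {K a b : ℝ} {s : Set ℝ}
    (hs : s.Countable) (hab : a ≤ b) (hg : ContinuousOn g (Icc a b))
    (hderiv : ∀ t ∈ Ioo a b \ s, HasDerivAt g (g' t) t)
    (hbound : ∀ t ∈ Ioo a b \ s, 0 < g t → g' t ≤ K * g t) (ha : g a ≤ 0) : g b ≤ 0 := by
  by_contra! hb
  obtain ⟨r, hr, hgr, hpos⟩ := hg.exists_last_nonpos hab ha
  have hrb : r < b := hr.2.lt_of_ne (by rintro rfl; linarith)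
  have hanti : AntitoneOn (fun t => g t * exp (-K * t)) (Icc r b) := by
    refine antitoneOn_of_hasDerivAt_nonpos_off_countable
      (φ' := fun t => (g' t - K * g t) * exp (-K * t)) hs
      ((hg.mono (Icc_subset_Icc hr.1 le_rfl)).mul (by fun_prop)) (fun t ht => ?_) (fun t ht => ?_)
    · exact ((hderiv t ⟨Ioo_subset_Ioo_left hr.1 ht.1, ht.2⟩).mul
        ((hasDerivAt_id' t).const_mul (-K)).exp).congr_deriv (by ring)
    · have := hbound t ⟨Ioo_subset_Ioo_left hr.1 ht.1, ht.2⟩ (hpos t ⟨ht.1.1, ht.1.2.le⟩)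
      exact mul_nonpos_of_nonpos_of_nonneg (by linarith) (exp_pos _).le
  have := hanti ⟨le_rfl, hrb.le⟩ ⟨hrb.le, le_rfl⟩ hrb.le
  nlinarith [exp_pos (-K * b), exp_pos (-K * r)]

theorem nonpos_of_nonpos_of_neg_mul_le_deriv {g g' : ℝ → ℝ} {K a b : ℝ} {s : Set ℝ}
    (hs : s.Countable) (hab : a ≤ b) (hg : ContinuousOn g (Icc a b))
    (hderiv : ∀ t ∈ Ioo a b \ s, HasDerivAt g (g' t) t)
    (hbound : ∀ t ∈ Ioo a b \ s, 0 < g t → -(K * g t) ≤ g' t) (hb : g b ≤ 0) : g a ≤ 0 := by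
  by_contra! ha
  obtain ⟨r, hr, hgr, hpos⟩ := hg.exists_first_nonpos hab hb
  have har : a < r := hr.1.lt_of_ne (by rintro rfl; linarith)
  have hmono : MonotoneOn (fun t => g t * exp (K * t)) (Icc a r) := by
    refine monotoneOn_of_hasDerivAt_nonneg_off_countable
      (φ' := fun t => (g' t + K * g t) * exp (K * t)) hs
      ((hg.mono (Icc_subset_Icc le_rfl hr.2)).mul (by fun_prop)) (fun t ht => ?_) (fun t ht => ?_)
    · exact ((hderiv t ⟨Ioo_subset_Ioo_right hr.2 ht.1, ht.2⟩).mul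
        ((hasDerivAt_id' t).const_mul K).exp).congr_deriv (by ring)
    · have := hbound t ⟨Ioo_subset_Ioo_right hr.2 ht.1, ht.2⟩ (hpos t ⟨ht.1.1.le, ht.1.2⟩)
      exact mul_nonneg (by linarith) (exp_pos _).le
  have := hmono ⟨le_rfl, har.le⟩ ⟨har.le, le_rfl⟩ har.le
  nlinarith [exp_pos (K * a), exp_pos (K * r)]

structure IsControlledPath (x v : ℝ → ℝ) (s : Set ℝ) (a b : ℝ) : Prop where
  countable : s.Countable
  continuousOn : ContinuousOn x (Icc a b)
  abs_le_one : ∀ t ∈ Ioo a b \ s, |v t| ≤ 1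
  hasDerivAt : ∀ t ∈ Ioo a b \ s, HasDerivAt x (-1 + x t * v t) t

namespace IsControlledPath

variable {x v : ℝ → ℝ} {s : Set ℝ} {a b : ℝ}

theorem mono (h : IsControlledPath x v s a b) {a' b' : ℝ} (ha : a ≤ a') (hb : b' ≤ b) :
    IsControlledPath x v s a' b' where
  countable := h.countable
  continuousOn := h.continuousOn.mono (Icc_subset_Icc ha hb)
  abs_le_one t ht := h.abs_le_one t ⟨Ioo_subset_Ioo ha hb ht.1, ht.2⟩
  hasDerivAt t ht := h.hasDerivAt t ⟨Ioo_subset_Ioo ha hb ht.1, ht.2⟩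

theorem le_of_le_left (h : IsControlledPath x v s a b) {c : ℝ} (hc0 : 0 ≤ c) (hc1 : c ≤ 1)
    (ha : x a ≤ c) : ∀ t ∈ Icc a b, x t ≤ c := by
  intro t ht
  have h' := h.mono le_rfl ht.2
  have := nonpos_of_nonpos_of_deriv_le_mul (g := fun t => x t - c) (K := 1) h'.countable ht.1
    (h'.continuousOn.sub continuousOn_const) (fun t ht => (h'.hasDerivAt t ht).sub_const c)
    (fun t ht hpos => ?_) (by simpa using ha)
  · simpa using this
  · have := abs_le.1 (h'.abs_le_one t ht)
    nlinarith

theorem nonneg_of_nonneg_right (h : IsControlledPath x v s a b) (hb : 0 ≤ x b) :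
    ∀ t ∈ Icc a b, 0 ≤ x t := by
  intro t ht
  have h' := h.mono ht.1 le_rfl
  have := nonpos_of_nonpos_of_neg_mul_le_deriv (g := fun t => -x t) (K := 1) h'.countable ht.2
    h'.continuousOn.neg (fun t ht => (h'.hasDerivAt t ht).neg)
    (fun t ht hpos => ?_) (by simpa using hb)
  · simpa using this
  · have := abs_le.1 (h'.abs_le_one t ht)
    nlinarith

theorem antitoneOn (h : IsControlledPath x v s a b) (hx : ∀ t ∈ Ioo a b \ s, |x t| ≤ 1) :
    AntitoneOn x (Icc a b) := by
  refine antitoneOn_of_hasDerivAt_nonpos_off_countable h.countable h.continuousOn h.hasDerivAt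
    fun t ht => ?_
  have : |x t * v t| ≤ 1 := by
    rw [abs_mul]; exact mul_le_one₀ (hx t ht) (abs_nonneg _) (h.abs_le_one t ht)
  linarith [le_abs_self (x t * v t)]

end IsControlledPath

section Pair

variable {f m u : ℝ → ℝ} {s : Set ℝ} {a b : ℝ}

theorem hasDerivAt_one_sub_mul_one_add (hf : IsControlledPath f u s a b)
    (hm : IsControlledPath m (fun t => -u t) s a b) {t : ℝ} (ht : t ∈ Ioo a b \ s) :
    HasDerivAt (fun t => (1 - m t) * (1 + f t)) ((f t + m t) * (1 + u t)) t :=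
  (((hm.hasDerivAt t ht).const_sub 1).mul ((hf.hasDerivAt t ht).const_add 1)).congr_deriv
    (by ring)

theorem monotoneOn_one_sub_mul_one_add (hf : IsControlledPath f u s a b)
    (hm : IsControlledPath m (fun t => -u t) s a b) (hS : ∀ t ∈ Ioo a b, 0 ≤ f t + m t) :
    MonotoneOn (fun t => (1 - m t) * (1 + f t)) (Icc a b) :=
  monotoneOn_of_hasDerivAt_nonneg_off_countable hf.countable
    ((continuousOn_const.sub hm.continuousOn).mul (continuousOn_const.add hf.continuousOn))
    (fun t ht => hasDerivAt_one_sub_mul_one_add hf hm ht)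
    fun t ht => mul_nonneg (hS t ht.1) (by linarith [(abs_le.1 (hf.abs_le_one t ht)).1])

theorem antitoneOn_one_sub_mul_one_add (hf : IsControlledPath f u s a b)
    (hm : IsControlledPath m (fun t => -u t) s a b) (hS : ∀ t ∈ Ioo a b, f t + m t ≤ 0) :
    AntitoneOn (fun t => (1 - m t) * (1 + f t)) (Icc a b) :=
  antitoneOn_of_hasDerivAt_nonpos_off_countable hf.countable
    ((continuousOn_const.sub hm.continuousOn).mul (continuousOn_const.add hf.continuousOn))
    (fun t ht => hasDerivAt_one_sub_mul_one_add hf hm ht)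
    fun t ht => mul_nonpos_of_nonpos_of_nonneg (hS t ht.1)
      (by linarith [(abs_le.1 (hf.abs_le_one t ht)).1])

theorem monotoneOn_one_add_mul_one_sub (hf : IsControlledPath f u s a b)
    (hm : IsControlledPath m (fun t => -u t) s a b) (hS : ∀ t ∈ Ioo a b, 0 ≤ f t + m t) :
    MonotoneOn (fun t => (1 + m t) * (1 - f t)) (Icc a b) :=
  monotoneOn_of_hasDerivAt_nonneg_off_countable (φ' := fun t => (f t + m t) * (1 - u t))
    hf.countable
    ((continuousOn_const.add hm.continuousOn).mul (continuousOn_const.sub hf.continuousOn))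
    (fun t ht => (((hm.hasDerivAt t ht).const_add 1).mul
      ((hf.hasDerivAt t ht).const_sub 1)).congr_deriv (by ring))
    fun t ht => mul_nonneg (hS t ht.1) (by linarith [(abs_le.1 (hf.abs_le_one t ht)).2])

end Pair

namespace IsTrajectory

variable {T lam : ℝ} {Δf Δm u : ℝ → ℝ}

theorem exists_isControlledPath (h : IsTrajectory T lam Δf Δm u) :
    ∃ s, IsControlledPath Δf u s 0 T ∧ IsControlledPath Δm (fun t => -u t) s 0 T := by
  obtain ⟨-, hf, hm, hu, ⟨s, hs, hDf, hDm⟩, -⟩ := h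
  have habs : ∀ t ∈ Ioo 0 T \ s, |u t| ≤ 1 := fun t ht =>
    abs_le.2 (hu t (Ioo_subset_Icc_self ht.1))
  exact ⟨s, ⟨hs, hf, habs, hDf⟩, ⟨hs, hm, fun t ht => (abs_neg (u t)).le.trans (habs t ht),
    fun t ht => (hDm t ht).congr_deriv (by ring)⟩⟩

theorem le_sq_of_pos (h : IsTrajectory T lam Δf Δm u) (hmT : 0 < Δm T) : Δm T ≤ lam ^ 2 := by
  obtain ⟨s, hf, hm⟩ := h.exists_isControlledPath
  obtain ⟨hT, -, -, -, -, hf0, hm0, hfT⟩ := h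
  have hf_nonneg := hf.nonneg_of_nonneg_right hfT.ge
  have hm_nonneg : ∀ t ∈ Icc 0 T, 0 ≤ Δm t := fun t ht => by
    by_contra! hmt
    linarith [(hm.mono ht.1 le_rfl).le_of_le_left le_rfl zero_le_one hmt.le T ⟨ht.2, le_rfl⟩]
  have hP := monotoneOn_one_sub_mul_one_add hf hm
    (fun t ht => add_nonneg (hf_nonneg t (Ioo_subset_Icc_self ht))
      (hm_nonneg t (Ioo_subset_Icc_self ht))) (left_mem_Icc.2 hT) (right_mem_Icc.2 hT) hT
  simp only [hf0, hm0, hfT] at hP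
  nlinarith

theorem one_sub_sq_le (h : IsTrajectory T lam Δf Δm u) (hlam0 : 0 ≤ lam) (hlam1 : lam < 1) :
    1 - (2 - √(1 - lam ^ 2)) ^ 2 ≤ Δm T := by
  set q := √(1 - lam ^ 2)
  have hq : q ^ 2 = 1 - lam ^ 2 := sq_sqrt (by nlinarith)
  have hq0 : 0 ≤ q := sqrt_nonneg _
  rcases le_or_gt 0 (Δm T) with hmT | hmT
  · nlinarith
  obtain ⟨s, hf, hm⟩ := h.exists_isControlledPath
  obtain ⟨hT, -, -, -, -, hf0, hm0, hfT⟩ := h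
  have hf_nonneg := hf.nonneg_of_nonneg_right hfT.ge
  have hf_le := hf.le_of_le_left hlam0 hlam1.le hf0.le
  have hS : ContinuousOn (fun t => Δf t + Δm t) (Icc 0 T) := hf.continuousOn.add hm.continuousOn
  -- `σ` is the first time with `Δf + Δm ≤ 0`, `τ` the last time with `Δf + Δm ≥ 0`.
  obtain ⟨σ, hσ, hSσ, hpos⟩ := hS.exists_first_nonpos hT (by simpa [hfT] using hmT.le)
  obtain ⟨τ, hτ, hSτ, hneg⟩ :=
    hS.neg.exists_last_nonpos hT (by simp only [Pi.neg_apply, hf0, hm0]; linarith)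
  simp only [Pi.neg_apply, neg_nonpos, neg_pos] at hSτ hneg
  have hστ : σ ≤ τ := by
    by_contra! hτσ
    obtain ⟨t, hτt, htσ⟩ := exists_between hτσ
    linarith [hpos t ⟨hτ.1.trans hτt.le, htσ⟩, hneg t ⟨hτt, htσ.le.trans hσ.2⟩]
  have hQ := monotoneOn_one_add_mul_one_sub (hf.mono le_rfl hσ.2) (hm.mono le_rfl hσ.2)
    (fun t ht => (hpos t ⟨ht.1.le, ht.2⟩).le) (left_mem_Icc.2 hσ.1) (right_mem_Icc.2 hσ.1) hσ.1
  have hP := antitoneOn_one_sub_mul_one_add (hf.mono hτ.1 le_rfl) (hm.mono hτ.1 le_rfl)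
    (fun t ht => by linarith [hneg t ⟨ht.1, ht.2.le⟩]) (left_mem_Icc.2 hτ.2)
    (right_mem_Icc.2 hτ.2) hτ.2
  have hf_anti := hf.antitoneOn fun t ht => abs_le.2
    ⟨by linarith [hf_nonneg t (Ioo_subset_Icc_self ht.1)],
      by linarith [hf_le t (Ioo_subset_Icc_self ht.1)]⟩
  simp only [hf0, hm0, hfT] at hQ hP hSσ hSτ
  have hfσ := hf_le σ hσ
  have hfτ := hf_nonneg τ hτ
  have hq_le : q ≤ 1 - Δf σ := by
    refine (pow_le_pow_iff_left₀ hq0 (by linarith) two_ne_zero).1 ?_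
    nlinarith
  calc 1 - (2 - q) ^ 2 ≤ 1 - (1 + Δf τ) ^ 2 := by
        nlinarith [hf_anti hσ hτ hστ]
    _ ≤ 1 - (1 - Δm τ) * (1 + Δf τ) := by nlinarith
    _ ≤ Δm T := by linarith

end IsTrajectory

theorem HasDerivAt.ite_le_of_ne {F G : ℝ → ℝ} {d t₁ t : ℝ} (ht : t ≠ t₁)
    (hF : t < t₁ → HasDerivAt F d t) (hG : t₁ < t → HasDerivAt G d t) :
    HasDerivAt (fun τ => if τ ≤ t₁ then F τ else G τ) d t := by
  rcases ht.lt_or_gt with h | h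
  · exact (hF h).congr_of_eventuallyEq <| by
      filter_upwards [Iio_mem_nhds h] with τ hτ using if_pos hτ.le
  · exact (hG h).congr_of_eventuallyEq <| by
      filter_upwards [Ioi_mem_nhds h] with τ hτ using if_neg (not_le.2 hτ)

theorem continuous_ite_le_of_eq {F G : ℝ → ℝ} {t₁ : ℝ} (hF : Continuous F) (hG : Continuous G)
    (hFG : F t₁ = G t₁) : Continuous fun t => if t ≤ t₁ then F t else G t :=
  Continuous.if_le hF hG continuous_id continuous_const fun t ht => by
    rw [show t = t₁ from ht]; exact hFG

theorem isTrajectory_ite {T lam t₁ : ℝ} {F₁ F₂ M₁ M₂ : ℝ → ℝ} (ht₁ : 0 ≤ t₁) (hT : t₁ ≤ T)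
    (hF₁ : ∀ t, HasDerivAt F₁ (-1 + F₁ t) t) (hF₂ : ∀ t, HasDerivAt F₂ (-1 - F₂ t) t)
    (hM₁ : ∀ t, HasDerivAt M₁ (-1 - M₁ t) t) (hM₂ : ∀ t, HasDerivAt M₂ (-1 + M₂ t) t)
    (hF : F₁ t₁ = F₂ t₁) (hM : M₁ t₁ = M₂ t₁) (hF₁0 : F₁ 0 = lam) (hM₁0 : M₁ 0 = lam)
    (hF₂T : F₂ T = 0) :
    IsTrajectory T lam (fun t => if t ≤ t₁ then F₁ t else F₂ t)
      (fun t => if t ≤ t₁ then M₁ t else M₂ t) (fun t => if t ≤ t₁ then 1 else -1) := by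
  have hcont {F : ℝ → ℝ} {F' : ℝ → ℝ} (h : ∀ t, HasDerivAt F (F' t) t) : Continuous F :=
    continuous_iff_continuousAt.2 fun t => (h t).continuousAt
  refine ⟨ht₁.trans hT, (continuous_ite_le_of_eq (hcont hF₁) (hcont hF₂) hF).continuousOn,
    (continuous_ite_le_of_eq (hcont hM₁) (hcont hM₂) hM).continuousOn,
    fun t _ => by beta_reduce; split_ifs <;> norm_num,
    ⟨{t₁}, countable_singleton t₁, fun t ht => ?_, fun t ht => ?_⟩,
    by simp [ht₁, hF₁0], by simp [ht₁, hM₁0], ?_⟩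
  · refine HasDerivAt.ite_le_of_ne ht.2 (fun h => (hF₁ t).congr_deriv ?_)
      (fun h => (hF₂ t).congr_deriv ?_)
    · simp only [if_pos h.le]; ring
    · simp only [if_neg (not_le.2 h)]; ring
  · refine HasDerivAt.ite_le_of_ne ht.2 (fun h => (hM₁ t).congr_deriv ?_)
      (fun h => (hM₂ t).congr_deriv ?_)
    · simp only [if_pos h.le]; ring
    · simp only [if_neg (not_le.2 h)]; ring
  · rcases hT.eq_or_lt with h | h
    · simp [← h, hF, ← hF₂T]
    · simp [not_le.2 h, hF₂T]

theorem exists_isTrajectory_abs_eq (lam : ℝ) (hlam0 : 0 ≤ lam) (hlam1 : lam < 1) :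
    ∃ (T : ℝ) (Δf Δm u : ℝ → ℝ), IsTrajectory T lam Δf Δm u ∧
      |Δm T| = 4 - lam ^ 2 - 4 * √(1 - lam ^ 2) := by
  set q := √(1 - lam ^ 2)
  have hq : q ^ 2 = 1 - lam ^ 2 := sq_sqrt (by nlinarith)
  have hq0 : 0 < q := sqrt_pos.2 (by nlinarith)
  have hq1 : q ≤ 1 := by nlinarith
  set t₁ := log ((1 + lam) / q)
  have ht₁ : 0 ≤ t₁ := log_nonneg (by rw [le_div_iff₀ hq0]; linarith)
  have he₁ : exp t₁ = (1 + lam) / q := exp_log (by positivity)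
  set T := t₁ + log (2 - q)
  have hT : t₁ ≤ T := le_add_of_nonneg_right (log_nonneg (by linarith))
  have heT : exp (T - t₁) = 2 - q := by
    rw [show T - t₁ = log (2 - q) by ring, exp_log (by linarith)]
  set F₁ : ℝ → ℝ := fun t => 1 + (lam - 1) * exp t
  set F₂ : ℝ → ℝ := fun t => -1 + (2 - q) * exp (-(t - t₁))
  set M₁ : ℝ → ℝ := fun t => -1 + (1 + lam) * exp (-t)
  set M₂ : ℝ → ℝ := fun t => 1 + (q - 2) * exp (t - t₁)
  have hF₁ (t : ℝ) : HasDerivAt F₁ (-1 + F₁ t) t :=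
    (((hasDerivAt_exp t).const_mul (lam - 1)).const_add 1).congr_deriv (by ring)
  have hF₂ (t : ℝ) : HasDerivAt F₂ (-1 - F₂ t) t :=
    ((((hasDerivAt_id' t).sub_const t₁).neg.exp.const_mul (2 - q)).const_add
      (-1)).congr_deriv (by simp only [Pi.neg_apply]; ring)
  have hM₁ (t : ℝ) : HasDerivAt M₁ (-1 - M₁ t) t :=
    (((hasDerivAt_id' t).neg.exp.const_mul (1 + lam)).const_add (-1)).congr_deriv
      (by simp only [Pi.neg_apply]; ring)
  have hM₂ (t : ℝ) : HasDerivAt M₂ (-1 + M₂ t) t :=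
    ((((hasDerivAt_id' t).sub_const t₁).exp.const_mul (q - 2)).const_add 1).congr_deriv
      (by ring)
  have hF : F₁ t₁ = F₂ t₁ := by
    simp only [F₁, F₂, he₁, sub_self, neg_zero, exp_zero]
    field_simp
    nlinarith
  have hM : M₁ t₁ = M₂ t₁ := by
    simp only [M₁, M₂, exp_neg, he₁, sub_self, exp_zero]
    field_simp
    ring
  have hF₂T : F₂ T = 0 := by
    simp only [F₂, exp_neg, heT]
    rw [mul_inv_cancel₀ (by linarith)]
    ring
  refine ⟨T, _, _, _, isTrajectory_ite ht₁ hT hF₁ hF₂ hM₁ hM₂ hF hM (by simp [F₁]) (by simp [M₁])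
    hF₂T, ?_⟩
  have hmT : (if T ≤ t₁ then M₁ T else M₂ T) = M₂ T := by
    split_ifs with h
    · rw [le_antisymm h hT, hM]
    · rfl
  rw [hmT]
  simp only [M₂, heT]
  rw [abs_of_nonpos (by nlinarith)]
  linear_combination hq

theorem stmt_17 (lam : ℝ) (hlam0 : 0 ≤ lam) (hlam1 : lam < 1) :
    (∀ (T : ℝ) (Δf Δm u : ℝ → ℝ), IsTrajectory T lam Δf Δm u →
      |Δm T| ≤ 4 - lam^2 - 4*Real.sqrt (1 - lam^2)) ∧
    (∃ (T : ℝ) (Δf Δm u : ℝ → ℝ), IsTrajectory T lam Δf Δm u ∧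
      |Δm T| = 4 - lam^2 - 4*Real.sqrt (1 - lam^2)) := by
  refine ⟨fun T Δf Δm u h => ?_, exists_isTrajectory_abs_eq lam hlam0 hlam1⟩
  have hq : √(1 - lam ^ 2) ^ 2 = 1 - lam ^ 2 := sq_sqrt (by nlinarith)
  have hlower := h.one_sub_sq_le hlam0 hlam1
  rcases le_or_gt (Δm T) 0 with hmT | hmT
  · rw [abs_of_nonpos hmT]
    nlinarith
  · rw [abs_of_pos hmT]
    nlinarith [h.le_sq_of_pos hmT, sq_nonneg (√(1 - lam ^ 2) - 1)]
end

section
/- Let x̂ ∈ ℝⁿ, g ∈ ℝⁿ, and let G be a symmetric positive definite n×n matrix. Define q(x) = c − (1/2) log((1 − ⟨g, x − x̂⟩)² − (x − x̂)ᵀG(x − x̂)) on the open set E = { x : 1 − ⟨g, x − x̂⟩ > √((x−x̂)ᵀG(x−x̂)) }. Then q(x̂) = c, q'(x̂) = g, q''(x̂) = G + ggᵀ, and q satisfies the projective self-concordance identity C(x)[h,h,h] = 0 and q''(x) − q'(x)q'(x)ᵀ ≻ 0 for all x ∈ E, i.e. q is projectively self-concordant on E with parameter γ = 0. -/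
open Filter

variable {E : Type*} [NormedAddCommGroup E] [NormedSpace ℝ E]

/-!
Restricted to a line `x + t • h`, the argument of the logarithm in `q` is a quadratic polynomial
`a + b t + d t²` with `a > 0`, so the derivatives of `q` at `x` in direction `h` are those of
`F t = c - ½ log (a + b t + d t²)` at `0`. Since `exp (-2 F)` is quadratic, its third derivative
`-2 (F''' - 6 F'' F' + 4 F'³) exp (-2 F)` vanishes, which is the vanishing of the cubic form.
The affine metric `F'' - F'²` equals `(b² - 4ad) / (4a²)`, and the discriminant is positive:
the quadratic has two distinct real roots on every line through a point of `E` in a direction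
`h ≠ 0`.
-/

open Matrix Topology

theorem iteratedDeriv_comp_add_smul {F : Type*} [NormedAddCommGroup F] [NormedSpace ℝ F]
    {f : E → F} {s : Set E} (hs : IsOpen s) {n : ℕ} (hf : ContDiffOn ℝ n f s) {x h : E} {t : ℝ}
    (ht : x + t • h ∈ s) :
    iteratedDeriv n (fun τ : ℝ => f (x + τ • h)) t =
      iteratedFDeriv ℝ n f (x + t • h) (fun _ => h) := by
  induction n generalizing t with
  | zero => simp
  | succ n ih =>
    have hline : IsOpen {τ : ℝ | x + τ • h ∈ s} := hs.preimage (by fun_prop)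
    have hlower : iteratedDeriv n (fun τ : ℝ => f (x + τ • h)) =ᶠ[𝓝 t]
        fun τ => iteratedFDeriv ℝ n f (x + τ • h) (fun _ => h) := by
      filter_upwards [hline.mem_nhds ht] with τ hτ
      exact ih (hf.of_le (by norm_cast; omega)) hτ
    rw [iteratedDeriv_succ, hlower.deriv_eq]
    exact (hf.contDiffAt (hs.mem_nhds ht)).deriv_fderiv_add_smul

theorem iteratedDeriv_succ_eq_of_hasDerivAt {𝕜 F : Type*} [NontriviallyNormedField 𝕜]
    [NormedAddCommGroup F] [NormedSpace 𝕜 F] {f f' : 𝕜 → F} {U : Set 𝕜} (hU : IsOpen U)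
    (hf : ∀ t ∈ U, HasDerivAt f (f' t) t) {t : 𝕜} (ht : t ∈ U) (n : ℕ) :
    iteratedDeriv (n + 1) f t = iteratedDeriv n f' t := by
  rw [iteratedDeriv_succ']
  refine Filter.EventuallyEq.iteratedDeriv_eq n ?_
  filter_upwards [hU.mem_nhds ht] with τ hτ using (hf τ hτ).deriv

theorem iteratedDeriv_neg_half_log_quadratic (c a b d : ℝ) (ha : 0 < a) :
    let F := fun t : ℝ => c - 1 / 2 * Real.log (a + b * t + d * t ^ 2)
    deriv F 0 = -b / (2 * a) ∧
      iteratedDeriv 2 F 0 = (b ^ 2 - 2 * a * d) / (2 * a ^ 2) ∧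
      iteratedDeriv 3 F 0 = b * (3 * a * d - b ^ 2) / a ^ 3 := by
  intro F
  set P := fun t : ℝ => a + b * t + d * t ^ 2
  set P' := fun t : ℝ => b + 2 * d * t
  have hP : ∀ t, HasDerivAt P (P' t) t := fun t =>
    ((((hasDerivAt_id t).const_mul b).const_add a).add
      ((hasDerivAt_pow 2 t).const_mul d)).congr_deriv (by simp [P']; ring)
  have hP' : ∀ t, HasDerivAt P' (2 * d) t := fun t => by
    simpa [P'] using ((hasDerivAt_id t).const_mul (2 * d)).const_add b
  set U := {t : ℝ | 0 < P t}
  have hU : IsOpen U := isOpen_lt continuous_const (by fun_prop)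
  have h0 : (0 : ℝ) ∈ U := by simpa [U, P] using ha
  set F₁ := fun t => -P' t / (2 * P t)
  set F₂ := fun t => (P' t ^ 2 - 2 * d * P t) / (2 * P t ^ 2)
  set F₃ := fun t => P' t * (3 * d * P t - P' t ^ 2) / P t ^ 3
  have hF : ∀ t ∈ U, HasDerivAt F (F₁ t) t := fun t (ht : 0 < P t) => by
    refine ((hasDerivAt_const t c).sub (((hP t).log ht.ne').const_mul (1 / 2))).congr_deriv ?_
    simp only [F₁]
    field_simp
    ring
  have hF₁ : ∀ t ∈ U, HasDerivAt F₁ (F₂ t) t := fun t (ht : 0 < P t) => by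
    have := ht.ne'
    refine ((hP' t).neg.div ((hP t).const_mul 2) (by positivity)).congr_deriv ?_
    simp only [F₂, Pi.neg_apply]
    field_simp
    ring
  have hF₂ : ∀ t ∈ U, HasDerivAt F₂ (F₃ t) t := fun t (ht : 0 < P t) => by
    have := ht.ne'
    refine ((((hP' t).pow 2).sub ((hP t).const_mul (2 * d))).div
      (((hP t).pow 2).const_mul 2) (by simp [this])).congr_deriv ?_
    simp only [F₃, Pi.pow_apply, Pi.sub_apply]
    field_simp
    ring
  have hP0 : P 0 = a := by simp [P]
  refine ⟨?_, ?_, ?_⟩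
  · rw [(hF 0 h0).deriv]
    simp [F₁, P', hP0]
  · rw [iteratedDeriv_succ_eq_of_hasDerivAt hU hF h0, iteratedDeriv_one, (hF₁ 0 h0).deriv]
    simp [F₂, P', hP0]
    ring
  · rw [iteratedDeriv_succ_eq_of_hasDerivAt hU hF h0,
      iteratedDeriv_succ_eq_of_hasDerivAt hU hF₁ h0, iteratedDeriv_one, (hF₂ 0 h0).deriv]
    simp [F₃, P', hP0]
    ring

section LogOfQuadraticOnLine

variable {P : E → ℝ} {x h : E} {b d : ℝ}

theorem iteratedFDeriv_neg_half_log_of_quadratic_on_line (c : ℝ) (hP : ContDiff ℝ 3 P)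
    (hx : 0 < P x) (hline : ∀ t : ℝ, P (x + t • h) = P x + b * t + d * t ^ 2) :
    fderiv ℝ (fun y => c - 1 / 2 * Real.log (P y)) x h = -b / (2 * P x) ∧
      iteratedFDeriv ℝ 2 (fun y => c - 1 / 2 * Real.log (P y)) x (fun _ => h) =
        (b ^ 2 - 2 * P x * d) / (2 * P x ^ 2) ∧
      iteratedFDeriv ℝ 3 (fun y => c - 1 / 2 * Real.log (P y)) x (fun _ => h) =
        b * (3 * P x * d - b ^ 2) / P x ^ 3 := by
  have hs : IsOpen {y | 0 < P y} := isOpen_lt continuous_const hP.continuous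
  have hq : ContDiffOn ℝ 3 (fun y => c - 1 / 2 * Real.log (P y)) {y | 0 < P y} :=
    contDiffOn_const.sub (contDiffOn_const.mul (hP.contDiffOn.log fun y hy => hy.ne'))
  have hrestrict : ∀ n ≤ 3, iteratedFDeriv ℝ n (fun y => c - 1 / 2 * Real.log (P y)) x
      (fun _ => h) = iteratedDeriv n (fun t => c - 1 / 2 * Real.log (P x + b * t + d * t ^ 2)) 0 :=
    fun n hn => by
      have hcomp := iteratedDeriv_comp_add_smul hs (hq.of_le (by exact_mod_cast hn)) (h := h)
        (t := 0) (by simpa)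
      simp only [hline, zero_smul, add_zero] at hcomp
      exact hcomp.symm
  obtain ⟨h1, h2, h3⟩ := iteratedDeriv_neg_half_log_quadratic c (P x) b d hx
  refine ⟨?_, (hrestrict 2 (by norm_num)).trans h2, (hrestrict 3 le_rfl).trans h3⟩
  rw [← iteratedFDeriv_one_apply (m := fun _ => h), hrestrict 1 (by norm_num), iteratedDeriv_one,
    h1]

theorem cubicForm_neg_half_log_of_quadratic_on_line (c : ℝ) (hP : ContDiff ℝ 3 P)
    (hx : 0 < P x) (hline : ∀ t : ℝ, P (x + t • h) = P x + b * t + d * t ^ 2) :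
    cubicForm (fun y => c - 1 / 2 * Real.log (P y)) x h = 0 := by
  obtain ⟨h1, h2, h3⟩ := iteratedFDeriv_neg_half_log_of_quadratic_on_line c hP hx hline
  rw [cubicForm, h1, h2, h3]
  field_simp
  ring

theorem affMetric_neg_half_log_of_quadratic_on_line (c : ℝ) (hP : ContDiff ℝ 3 P)
    (hx : 0 < P x) (hline : ∀ t : ℝ, P (x + t • h) = P x + b * t + d * t ^ 2) :
    affMetric (fun y => c - 1 / 2 * Real.log (P y)) x h =
      (b ^ 2 - 4 * P x * d) / (4 * P x ^ 2) := by
  obtain ⟨h1, h2, -⟩ := iteratedFDeriv_neg_half_log_of_quadratic_on_line c hP hx hline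
  rw [affMetric, h1, h2]
  field_simp
  ring

end LogOfQuadraticOnLine

theorem Matrix.IsSymm.dotProduct_mulVec_comm {ι R : Type*} [Fintype ι] [CommSemiring R]
    {G : Matrix ι ι R} (hG : G.IsSymm) (u v : ι → R) : u ⬝ᵥ G *ᵥ v = v ⬝ᵥ G *ᵥ u := by
  rw [dotProduct_mulVec, ← hG.eq, vecMul_transpose, dotProduct_comm, hG.eq]

section Cone

variable {ι : Type*} [Fintype ι] (g : ι → ℝ) (G : Matrix ι ι ℝ) (xh : ι → ℝ)

def coneQuadratic (x : ι → ℝ) : ℝ :=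
  (1 - g ⬝ᵥ (x - xh)) ^ 2 - (x - xh) ⬝ᵥ G *ᵥ (x - xh)

theorem contDiff_coneQuadratic {n : WithTop ℕ∞} : ContDiff ℝ n (coneQuadratic g G xh) := by
  unfold coneQuadratic
  simp only [dotProduct, mulVec, Pi.sub_apply]
  fun_prop

variable {g G xh}

theorem coneQuadratic_add_smul (hG : G.IsSymm) (x h : ι → ℝ) (t : ℝ) :
    coneQuadratic g G xh (x + t • h) = coneQuadratic g G xh x
      + -2 * ((1 - g ⬝ᵥ (x - xh)) * (g ⬝ᵥ h) + (x - xh) ⬝ᵥ G *ᵥ h) * t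
      + ((g ⬝ᵥ h) ^ 2 - h ⬝ᵥ G *ᵥ h) * t ^ 2 := by
  have hsplit : x + t • h - xh = (x - xh) + t • h := by abel
  simp only [coneQuadratic, hsplit, dotProduct_add, add_dotProduct, dotProduct_smul,
    smul_dotProduct, mulVec_add, mulVec_smul, smul_eq_mul, hG.dotProduct_mulVec_comm h (x - xh)]
  ring

theorem coneQuadratic_pos {x : ι → ℝ}
    (hx : √((x - xh) ⬝ᵥ G *ᵥ (x - xh)) < 1 - g ⬝ᵥ (x - xh)) : 0 < coneQuadratic g G xh x := by
  have := (Real.sqrt_lt' ((Real.sqrt_nonneg _).trans_lt hx)).mp hx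
  rw [coneQuadratic]
  linarith

-- With `u = x - xh`, `r = 1 - g ⬝ᵥ u`, `p = g ⬝ᵥ h` and `v = r • h + p • u`, `r²` times the
-- difference of the two sides is `vᵀGv · coneQuadratic + (vᵀGu)²`, and `v ≠ 0` as `g ⬝ᵥ v = p`.
theorem coneQuadratic_line_discrim_pos (hG : G.PosDef) {x h : ι → ℝ}
    (hx : √((x - xh) ⬝ᵥ G *ᵥ (x - xh)) < 1 - g ⬝ᵥ (x - xh)) (hh : h ≠ 0) :
    ((g ⬝ᵥ h) ^ 2 - h ⬝ᵥ G *ᵥ h) * coneQuadratic g G xh x <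
      ((1 - g ⬝ᵥ (x - xh)) * (g ⬝ᵥ h) + (x - xh) ⬝ᵥ G *ᵥ h) ^ 2 := by
  have hA := coneQuadratic_pos hx
  have hsymm : G.IsSymm := isHermitian_iff_isSymm.mp hG.isHermitian
  rw [coneQuadratic] at hA ⊢
  set u := x - xh
  set r := 1 - g ⬝ᵥ u
  set p := g ⬝ᵥ h
  have hr : 0 < r := (Real.sqrt_nonneg _).trans_lt hx
  have hv : r • h + p • u ≠ 0 := by
    intro hv
    have hp : p = 0 := by
      have := congrArg (g ⬝ᵥ ·) hv
      simp only [dotProduct_add, dotProduct_smul, smul_eq_mul, dotProduct_zero] at this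
      linear_combination this
    exact hh (by simpa [hp, hr.ne'] using hv)
  have hvG : 0 < (r • h + p • u) ⬝ᵥ G *ᵥ (r • h + p • u) := by
    simpa using hG.dotProduct_mulVec_pos hv
  have key : r ^ 2 * ((r * p + u ⬝ᵥ G *ᵥ h) ^ 2 - (p ^ 2 - h ⬝ᵥ G *ᵥ h) * (r ^ 2 - u ⬝ᵥ G *ᵥ u)) =
      (r • h + p • u) ⬝ᵥ G *ᵥ (r • h + p • u) * (r ^ 2 - u ⬝ᵥ G *ᵥ u) +
        ((r • h + p • u) ⬝ᵥ G *ᵥ u) ^ 2 := by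
    simp only [dotProduct_add, add_dotProduct, dotProduct_smul, smul_dotProduct, mulVec_add,
      mulVec_smul, smul_eq_mul, hsymm.dotProduct_mulVec_comm h u]
    ring
  have hscaled : 0 < r ^ 2 *
      ((r * p + u ⬝ᵥ G *ᵥ h) ^ 2 - (p ^ 2 - h ⬝ᵥ G *ᵥ h) * (r ^ 2 - u ⬝ᵥ G *ᵥ u)) := by
    rw [key]
    positivity
  linarith [pos_of_mul_pos_right hscaled (sq_nonneg r)]

end Cone

open Matrix in
theorem stmt_18_general {n : ℕ} (xh g : Fin n → ℝ) (c : ℝ)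
    (G : Matrix (Fin n) (Fin n) ℝ) (hGpd : G.PosDef)
    (q : (Fin n → ℝ) → ℝ)
    (hq : q = fun x => c - (1/2) * Real.log ((1 - g ⬝ᵥ (x - xh))^2 - (x - xh) ⬝ᵥ G.mulVec (x - xh)))
    (Eset : Set (Fin n → ℝ))
    (hE : Eset = {x | Real.sqrt ((x - xh) ⬝ᵥ G.mulVec (x - xh)) < 1 - g ⬝ᵥ (x - xh)}) :
    q xh = c ∧
    (∀ h : Fin n → ℝ, fderiv ℝ q xh h = g ⬝ᵥ h) ∧
    (∀ h : Fin n → ℝ, iteratedFDeriv ℝ 2 q xh (fun _ => h) = h ⬝ᵥ G.mulVec h + (g ⬝ᵥ h)^2) ∧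
    (∀ x ∈ Eset, ∀ h : Fin n → ℝ, cubicForm q x h = 0) ∧
    (∀ x ∈ Eset, ∀ h : Fin n → ℝ, h ≠ 0 → 0 < affMetric q x h) := by
  obtain rfl : q = fun y => c - 1 / 2 * Real.log (coneQuadratic g G xh y) := hq
  subst hE
  have hP := contDiff_coneQuadratic (n := 3) g G xh
  have hline := coneQuadratic_add_smul (g := g) (xh := xh)
    (isHermitian_iff_isSymm.mp hGpd.isHermitian)
  have hderivs_xh (h : Fin n → ℝ) :=
    iteratedFDeriv_neg_half_log_of_quadratic_on_line c hP (by simp [coneQuadratic]) (hline xh h)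
  refine ⟨by simp [coneQuadratic], fun h => ?_, fun h => ?_, fun x hx h => ?_, fun x hx h hh => ?_⟩
  · rw [(hderivs_xh h).1]
    simp [coneQuadratic]
  · rw [(hderivs_xh h).2.1]
    simp [coneQuadratic]
    ring
  · exact cubicForm_neg_half_log_of_quadratic_on_line c hP (coneQuadratic_pos hx) (hline x h)
  · have hpos := coneQuadratic_pos hx
    have hdiscrim := coneQuadratic_line_discrim_pos hGpd hx hh
    rw [affMetric_neg_half_log_of_quadratic_on_line c hP hpos (hline x h)]
    exact div_pos (by nlinarith) (by positivity)

open Matrix in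
theorem stmt_18 {n : ℕ} (xh g : Fin n → ℝ) (c : ℝ)
    (G : Matrix (Fin n) (Fin n) ℝ) (hG : G.IsSymm) (hGpd : G.PosDef)
    (q : (Fin n → ℝ) → ℝ)
    (hq : q = fun x => c - (1/2) * Real.log ((1 - g ⬝ᵥ (x - xh))^2 - (x - xh) ⬝ᵥ G.mulVec (x - xh)))
    (Eset : Set (Fin n → ℝ))
    (hE : Eset = {x | Real.sqrt ((x - xh) ⬝ᵥ G.mulVec (x - xh)) < 1 - g ⬝ᵥ (x - xh)}) :
    q xh = c ∧
    (∀ h : Fin n → ℝ, fderiv ℝ q xh h = g ⬝ᵥ h) ∧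
    (∀ h : Fin n → ℝ, iteratedFDeriv ℝ 2 q xh (fun _ => h) = h ⬝ᵥ G.mulVec h + (g ⬝ᵥ h)^2) ∧
    (∀ x ∈ Eset, ∀ h : Fin n → ℝ, cubicForm q x h = 0) ∧
    (∀ x ∈ Eset, ∀ h : Fin n → ℝ, h ≠ 0 → 0 < affMetric q x h) :=
  stmt_18_general xh g c G hGpd q hq Eset hE
end

section
/- Let n ≥ 2, let K ⊂ ℝⁿ be a regular convex cone and F : int K → ℝ a C³ logarithmically homogeneous function of degree ν (F(tx) = −ν log t + F(x)) with F''(x) ≻ 0 and |F'''(x)[h,h,h]| ≤ 2(F''(x)[h,h])^{3/2} for all x ∈ int K, h ∈ ℝⁿ. Then ν ≥ 2. -/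
/-!
Fix `x ≠ 0` in the interior of the cone. Differentiating `F (t • x) = F x - ν log t` at `t = 1`
gives `F'(x)[x] = -ν`, `F''(x)[x, ·] = -F'(x)` and `F'''(x)[x, ·, ·] = -2 F''(x)`; in particular
`F''(x)[x, x] = ν > 0`. Since `n ≥ 2` there is `w ≠ 0` with `F''(x)[x, w] = 0`. Writing
`β = F''(x)[w, w]` and `m = F'''(x)[w, w, w]`, along `h = w + s • x` the quadratic form is
`β + ν s²` and the cubic form is `m - 6 β s - 2 ν s³`. Squaring the self-concordance inequality at
`s = ±√(β / ν)` and adding the two cases eliminates `m` and leaves `128 β² s² ≤ 64 β³`, i.e.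
`2 s² ≤ β = ν s²`.
-/

open Filter Topology Pointwise

section Homogeneity

variable {E V : Type*} [NormedAddCommGroup E] [NormedSpace ℝ E]
  [NormedAddCommGroup V] [NormedSpace ℝ V] {U : Set E}

def IsHomogeneousOn (G : E → V) (d : ℤ) (U : Set E) : Prop :=
  ∀ x ∈ U, ∀ t : ℝ, 0 < t → G (t • x) = t ^ d • G x

def IsLogHomogeneousOn (F : E → ℝ) (ν : ℝ) (U : Set E) : Prop :=
  ∀ x ∈ U, ∀ t : ℝ, 0 < t → F (t • x) = -ν * Real.log t + F x

theorem smul_fderiv_smul_eq {G : E → V} {t c : ℝ} {z : E} {b : V}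
    (hGt : DifferentiableAt ℝ G (t • z)) (hG : DifferentiableAt ℝ G z)
    (h : (fun y => G (t • y)) =ᶠ[𝓝 z] fun y => c • G y + b) :
    t • fderiv ℝ G (t • z) = c • fderiv ℝ G z := by
  have hl : HasFDerivAt (fun y => G (t • y)) (t • fderiv ℝ G (t • z)) z := by
    simpa [Function.comp_def] using hGt.hasFDerivAt.comp z ((hasFDerivAt_id z).const_smul t)
  have hr : HasFDerivAt (fun y => c • G y + b) (c • fderiv ℝ G z) z :=
    (hG.hasFDerivAt.const_smul c).add_const b
  exact hl.unique (hr.congr_of_eventuallyEq h)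

theorem hasDerivAt_comp_smul_one {G : E → V} {z : E} (hG : DifferentiableAt ℝ G z) :
    HasDerivAt (fun t : ℝ => G (t • z)) (fderiv ℝ G z z) 1 := by
  have h : HasDerivAt (fun t : ℝ => t • z) z 1 := by
    simpa using (hasDerivAt_id (1 : ℝ)).smul_const z
  have hG1 : HasFDerivAt G (fderiv ℝ G z) ((1 : ℝ) • z) := by
    rw [one_smul]
    exact hG.hasFDerivAt
  exact hG1.comp_hasDerivAt 1 h

theorem IsHomogeneousOn.fderiv_apply_self {G : E → V} {d : ℤ} (hG : IsHomogeneousOn G d U)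
    {z : E} (hz : z ∈ U) (hGz : DifferentiableAt ℝ G z) :
    fderiv ℝ G z z = (d : ℝ) • G z := by
  have h : (fun t : ℝ => G (t • z)) =ᶠ[𝓝 1] fun t => t ^ d • G z :=
    (eventually_gt_nhds one_pos).mono fun t ht => hG z hz t ht
  refine (hasDerivAt_comp_smul_one hGz).unique
    ((?_ : HasDerivAt _ _ (1 : ℝ)).congr_of_eventuallyEq h)
  simpa using (hasDerivAt_zpow d (1 : ℝ) (Or.inl one_ne_zero)).smul_const (G z)

theorem IsLogHomogeneousOn.fderiv_apply_self {F : E → ℝ} {ν : ℝ}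
    (hF : IsLogHomogeneousOn F ν U) {z : E} (hz : z ∈ U) (hFz : DifferentiableAt ℝ F z) :
    fderiv ℝ F z z = -ν := by
  have h : (fun t : ℝ => F (t • z)) =ᶠ[𝓝 1] fun t => -ν * Real.log t + F z :=
    (eventually_gt_nhds one_pos).mono fun t ht => hF z hz t ht
  refine (hasDerivAt_comp_smul_one hFz).unique
    ((?_ : HasDerivAt _ _ (1 : ℝ)).congr_of_eventuallyEq h)
  simpa using ((Real.hasDerivAt_log one_ne_zero).const_mul (-ν)).add_const (F z)

variable (hU : IsOpen U) (hsmul : ∀ x ∈ U, ∀ t : ℝ, 0 < t → t • x ∈ U)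
include hU hsmul

theorem IsHomogeneousOn.isHomogeneousOn_fderiv {G : E → V} {d : ℤ}
    (hG : IsHomogeneousOn G d U) (hGd : DifferentiableOn ℝ G U) :
    IsHomogeneousOn (fderiv ℝ G) (d - 1) U := by
  intro z hz t ht
  have h : (fun y => G (t • y)) =ᶠ[𝓝 z] fun y => t ^ d • G y + 0 := by
    filter_upwards [hU.mem_nhds hz] with y hy
    rw [add_zero, hG y hy t ht]
  have key := smul_fderiv_smul_eq ((hGd _ (hsmul z hz t ht)).differentiableAt
    (hU.mem_nhds (hsmul z hz t ht))) ((hGd z hz).differentiableAt (hU.mem_nhds hz)) h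
  rw [zpow_sub_one₀ ht.ne', mul_comm, mul_smul, ← key, smul_smul, inv_mul_cancel₀ ht.ne',
    one_smul]

theorem IsLogHomogeneousOn.isHomogeneousOn_fderiv {F : E → ℝ} {ν : ℝ}
    (hF : IsLogHomogeneousOn F ν U) (hFd : DifferentiableOn ℝ F U) :
    IsHomogeneousOn (fderiv ℝ F) (-1) U := by
  intro z hz t ht
  have h : (fun y => F (t • y)) =ᶠ[𝓝 z] fun y => (1 : ℝ) • F y + -ν * Real.log t := by
    filter_upwards [hU.mem_nhds hz] with y hy
    rw [one_smul, add_comm, hF y hy t ht]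
  have key := smul_fderiv_smul_eq ((hFd _ (hsmul z hz t ht)).differentiableAt
    (hU.mem_nhds (hsmul z hz t ht))) ((hFd z hz).differentiableAt (hU.mem_nhds hz)) h
  rw [one_smul] at key
  rw [zpow_neg_one, ← key, smul_smul, inv_mul_cancel₀ ht.ne', one_smul]

variable {F : E → ℝ} {ν : ℝ} {x : E}

theorem IsLogHomogeneousOn.second_fderiv_apply_self_self (hF : IsLogHomogeneousOn F ν U)
    (hC : ContDiffOn ℝ 3 F U) (hx : x ∈ U) : fderiv ℝ (fderiv ℝ F) x x x = ν := by
  have hC1 : ContDiffOn ℝ 2 (fderiv ℝ F) U := hC.fderiv_of_isOpen hU (by norm_num)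
  have hF1 := hF.isHomogeneousOn_fderiv hU hsmul (hC.differentiableOn (by norm_num))
  rw [hF1.fderiv_apply_self hx ((hC1.differentiableOn (by norm_num)).differentiableAt
    (hU.mem_nhds hx)), smul_apply, hF.fderiv_apply_self hx
    ((hC.differentiableOn (by norm_num)).differentiableAt (hU.mem_nhds hx))]
  simp

theorem IsLogHomogeneousOn.third_fderiv_apply_self (hF : IsLogHomogeneousOn F ν U)
    (hC : ContDiffOn ℝ 3 F U) (hx : x ∈ U) :
    fderiv ℝ (fderiv ℝ (fderiv ℝ F)) x x = (-2 : ℝ) • fderiv ℝ (fderiv ℝ F) x := by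
  have hC1 : ContDiffOn ℝ 2 (fderiv ℝ F) U := hC.fderiv_of_isOpen hU (by norm_num)
  have hC2 : ContDiffOn ℝ 1 (fderiv ℝ (fderiv ℝ F)) U := hC1.fderiv_of_isOpen hU (by norm_num)
  have hF2 := (hF.isHomogeneousOn_fderiv hU hsmul (hC.differentiableOn (by norm_num)))
    |>.isHomogeneousOn_fderiv hU hsmul (hC1.differentiableOn (by norm_num))
  rw [hF2.fderiv_apply_self hx ((hC2.differentiableOn one_ne_zero).differentiableAt
    (hU.mem_nhds hx))]
  congr 1
  norm_num

end Homogeneity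

section ThirdDerivative

variable {E : Type*} [NormedAddCommGroup E] [NormedSpace ℝ E]

theorem iteratedFDeriv_three_apply {V : Type*} [NormedAddCommGroup V] [NormedSpace ℝ V]
    (f : E → V) (x : E) (m : Fin 3 → E) :
    iteratedFDeriv ℝ 3 f x m = fderiv ℝ (fderiv ℝ (fderiv ℝ f)) x (m 0) (m 1) (m 2) := by
  rw [iteratedFDeriv_succ_apply_right, iteratedFDeriv_two_apply]
  rfl

theorem fderiv_apply_apply {V W X : Type*} [NormedAddCommGroup V] [NormedSpace ℝ V]
    [NormedAddCommGroup W] [NormedSpace ℝ W] [NormedAddCommGroup X] [NormedSpace ℝ X]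
    {G : E → V →L[ℝ] W →L[ℝ] X} {x : E} (hG : DifferentiableAt ℝ G x) (a : E) (b : V) (c : W) :
    fderiv ℝ (fun y => G y b c) x a = fderiv ℝ G x a b c := by
  let L : (V →L[ℝ] W →L[ℝ] X) →L[ℝ] X :=
    (ContinuousLinearMap.apply ℝ X c).comp (ContinuousLinearMap.apply ℝ (W →L[ℝ] X) b)
  change fderiv ℝ (L ∘ G) x a = _
  rw [(L.hasFDerivAt.comp x hG.hasFDerivAt).fderiv]
  rfl

variable {F : E → ℝ} {x : E}

theorem ContDiffAt.third_fderiv_comm_left (hF : ContDiffAt ℝ 3 F x) (a b c : E) :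
    fderiv ℝ (fderiv ℝ (fderiv ℝ F)) x a b c = fderiv ℝ (fderiv ℝ (fderiv ℝ F)) x b a c := by
  rw [(hF.fderiv_right (m := 2) (by norm_num)).isSymmSndFDerivAt (by simp) a b]

theorem ContDiffAt.third_fderiv_comm_right (hF : ContDiffAt ℝ 3 F x) (a b c : E) :
    fderiv ℝ (fderiv ℝ (fderiv ℝ F)) x a b c = fderiv ℝ (fderiv ℝ (fderiv ℝ F)) x a c b := by
  have hB : DifferentiableAt ℝ (fderiv ℝ (fderiv ℝ F)) x :=
    ((hF.fderiv_right (m := 2) (by norm_num)).fderiv_right (m := 1) (by norm_num))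
      |>.differentiableAt one_ne_zero
  have hsymm : (fun y => fderiv ℝ (fderiv ℝ F) y b c) =ᶠ[𝓝 x]
      fun y => fderiv ℝ (fderiv ℝ F) y c b :=
    (hF.eventually (by simp)).mono fun y hy => hy.isSymmSndFDerivAt (by simp; norm_num) b c
  rw [← fderiv_apply_apply hB, ← fderiv_apply_apply hB, hsymm.fderiv_eq]

end ThirdDerivative

section Forms

variable {E : Type*} [NormedAddCommGroup E] [NormedSpace ℝ E]

theorem exists_ne_zero_apply_eq_zero [FiniteDimensional ℝ E] (hE : 1 < Module.finrank ℝ E)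
    (L : E →L[ℝ] ℝ) : ∃ w : E, w ≠ 0 ∧ L w = 0 := by
  have hker := (L : E →ₗ[ℝ] ℝ).ker_ne_bot_of_finrank_lt (by rwa [Module.finrank_self])
  obtain ⟨w, hw, hw0⟩ := (Submodule.ne_bot_iff _).1 hker
  exact ⟨w, hw0, hw⟩

variable {B : E →L[ℝ] E →L[ℝ] ℝ} {x w : E} {ν : ℝ}

theorem quadratic_form_add_smul (hB : ∀ a b, B a b = B b a) (hxx : B x x = ν)
    (hxw : B x w = 0) (s : ℝ) :
    B (w + s • x) (w + s • x) = B w w + s ^ 2 * ν := by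
  simp only [map_add, map_smul, add_apply, smul_apply, smul_eq_mul, hB w x, hxx, hxw]
  ring

theorem cubic_form_add_smul {T : E →L[ℝ] E →L[ℝ] E →L[ℝ] ℝ}
    (hTl : ∀ a b c, T a b c = T b a c) (hTr : ∀ a b c, T a b c = T a c b)
    (hB : ∀ a b, B a b = B b a) (hTx : T x = (-2 : ℝ) • B) (hxx : B x x = ν)
    (hxw : B x w = 0) (s : ℝ) :
    T (w + s • x) (w + s • x) (w + s • x) = T w w w - 6 * B w w * s - 2 * ν * s ^ 3 := by
  have hTx' : ∀ a b, T x a b = -2 * B a b := fun a b => by simp [hTx]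
  have hwwx : T w w x = -2 * B w w := by rw [hTr, hTl, hTx']
  have hwxw : T w x w = -2 * B w w := by rw [hTl, hTx']
  have hwxx : T w x x = 0 := by rw [hTl, hTr, hTx', hxw, mul_zero]
  simp only [map_add, map_smul, add_apply, smul_apply, smul_eq_mul, hwwx, hwxw, hwxx, hTx',
    hB w x, hxx, hxw]
  ring

end Forms

theorem smul_mem_interior_of_smul_mem {E : Type*} [NormedAddCommGroup E] [NormedSpace ℝ E]
    {K : Set E} (hK : ∀ x ∈ K, ∀ t : ℝ, 0 < t → t • x ∈ K) {x : E} (hx : x ∈ interior K)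
    {t : ℝ} (ht : 0 < t) : t • x ∈ interior K := by
  have hsub : t • K ⊆ K := by
    rintro _ ⟨y, hy, rfl⟩
    exact hK y hy t ht
  exact interior_mono hsub (by rw [interior_smul₀ ht.ne']; exact Set.smul_mem_smul_set hx)

theorem two_le_of_abs_cubic_le {m β ν : ℝ} (hβ : 0 < β) (hν : 0 < ν)
    (h : ∀ s : ℝ, |m - 6 * β * s - 2 * ν * s ^ 3| ≤ 2 * (β + s ^ 2 * ν) ^ ((3 : ℝ) / 2)) :
    2 ≤ ν := by
  have hsq : ∀ s : ℝ, (m - 6 * β * s - 2 * ν * s ^ 3) ^ 2 ≤ 4 * (β + s ^ 2 * ν) ^ 3 := by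
    intro s
    have h32 : ((β + s ^ 2 * ν) ^ ((3 : ℝ) / 2)) ^ 2 = (β + s ^ 2 * ν) ^ 3 := by
      rw [← Real.rpow_mul_natCast (by positivity)]
      norm_num
    calc (m - 6 * β * s - 2 * ν * s ^ 3) ^ 2 = |m - 6 * β * s - 2 * ν * s ^ 3| ^ 2 :=
          (sq_abs _).symm
      _ ≤ (2 * (β + s ^ 2 * ν) ^ ((3 : ℝ) / 2)) ^ 2 := pow_le_pow_left₀ (abs_nonneg _) (h s) 2
      _ = 4 * (β + s ^ 2 * ν) ^ 3 := by rw [mul_pow, h32]; norm_num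
  set α := Real.sqrt (β / ν)
  have hα : α ^ 2 * ν = β := by rw [Real.sq_sqrt (by positivity), div_mul_cancel₀ _ hν.ne']
  have hαpos : 0 < α := Real.sqrt_pos.2 (by positivity)
  have k₁ : (m - 8 * β * α) ^ 2 ≤ 32 * β ^ 3 := by
    convert hsq α using 1 <;> rw [← hα] <;> ring
  have k₂ : (m + 8 * β * α) ^ 2 ≤ 32 * β ^ 3 := by
    convert hsq (-α) using 1 <;> rw [← hα] <;> ring
  have h₁ : 64 * β ^ 2 * (2 * α ^ 2) ≤ 64 * β ^ 2 * β := by nlinarith [sq_nonneg m]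
  have h₂ : 2 * α ^ 2 ≤ ν * α ^ 2 := by
    rw [mul_comm ν, hα]
    exact le_of_mul_le_mul_left h₁ (by positivity)
  exact le_of_mul_le_mul_right h₂ (by positivity)

theorem stmt_19_general {n : ℕ} (hn : 2 ≤ n) (K : Set (EuclideanSpace ℝ (Fin n)))
    (hKint : (interior K).Nonempty)
    (hKcone : ∀ x ∈ K, ∀ t : ℝ, 0 < t → t • x ∈ K)
    (F : EuclideanSpace ℝ (Fin n) → ℝ) (ν : ℝ)
    (hF : ContDiffOn ℝ 3 F (interior K))
    (hhom : ∀ x ∈ interior K, ∀ t : ℝ, 0 < t → F (t • x) = -ν * Real.log t + F x)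
    (hpos : ∀ x ∈ interior K, ∀ h : EuclideanSpace ℝ (Fin n), h ≠ 0 →
      0 < iteratedFDeriv ℝ 2 F x (fun _ => h))
    (hsc : ∀ x ∈ interior K, ∀ h : EuclideanSpace ℝ (Fin n),
      |iteratedFDeriv ℝ 3 F x (fun _ => h)| ≤ 2 * (iteratedFDeriv ℝ 2 F x (fun _ => h)) ^ ((3:ℝ)/2)) :
    2 ≤ ν := by
  have hdim : 1 < Module.finrank ℝ (EuclideanSpace ℝ (Fin n)) := by
    rw [finrank_euclideanSpace_fin]; omega
  have : Nontrivial (EuclideanSpace ℝ (Fin n)) :=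
    Module.nontrivial_of_finrank_pos (R := ℝ) (by omega)
  have hsmul : ∀ x ∈ interior K, ∀ t : ℝ, 0 < t → t • x ∈ interior K :=
    fun _ hx _ ht => smul_mem_interior_of_smul_mem hKcone hx ht
  have hlog : IsLogHomogeneousOn F ν (interior K) := hhom
  obtain ⟨x, hxK, hx0⟩ := (dense_compl_singleton 0).inter_open_nonempty _ isOpen_interior hKint
  have hCx : ContDiffAt ℝ 3 F x := hF.contDiffAt (isOpen_interior.mem_nhds hxK)
  set B := fderiv ℝ (fderiv ℝ F) x
  set T := fderiv ℝ (fderiv ℝ (fderiv ℝ F)) x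
  have hxx : B x x = ν := hlog.second_fderiv_apply_self_self isOpen_interior hsmul hF hxK
  have hTx : T x = (-2 : ℝ) • B := hlog.third_fderiv_apply_self isOpen_interior hsmul hF hxK
  have hB : ∀ a b, B a b = B b a := hCx.isSymmSndFDerivAt (by simp; norm_num)
  have hν : 0 < ν := by
    simpa only [iteratedFDeriv_two_apply, ← hxx] using hpos x hxK x hx0
  obtain ⟨w, hw0, hxw⟩ := exists_ne_zero_apply_eq_zero hdim (B x)
  have hβ : 0 < B w w := by simpa [iteratedFDeriv_two_apply] using hpos x hxK w hw0
  refine two_le_of_abs_cubic_le (m := T w w w) hβ hν fun s => ?_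
  have h := hsc x hxK (w + s • x)
  rwa [iteratedFDeriv_three_apply, iteratedFDeriv_two_apply,
    cubic_form_add_smul hCx.third_fderiv_comm_left hCx.third_fderiv_comm_right hB hTx hxx hxw,
    quadratic_form_add_smul hB hxx hxw] at h

theorem stmt_19 {n : ℕ} (hn : 2 ≤ n) (K : Set (EuclideanSpace ℝ (Fin n)))
    (hKclosed : IsClosed K) (hKconv : Convex ℝ K)
    (hKint : (interior K).Nonempty)
    (hKcone : ∀ x ∈ K, ∀ t : ℝ, 0 < t → t • x ∈ K)
    (hKpointed : ∀ x ∈ K, -x ∈ K → x = 0)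
    (F : EuclideanSpace ℝ (Fin n) → ℝ) (ν : ℝ)
    (hF : ContDiffOn ℝ 3 F (interior K))
    (hhom : ∀ x ∈ interior K, ∀ t : ℝ, 0 < t → F (t • x) = -ν * Real.log t + F x)
    (hpos : ∀ x ∈ interior K, ∀ h : EuclideanSpace ℝ (Fin n), h ≠ 0 →
      0 < iteratedFDeriv ℝ 2 F x (fun _ => h))
    (hsc : ∀ x ∈ interior K, ∀ h : EuclideanSpace ℝ (Fin n),
      |iteratedFDeriv ℝ 3 F x (fun _ => h)| ≤ 2 * (iteratedFDeriv ℝ 2 F x (fun _ => h)) ^ ((3:ℝ)/2)) :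
    2 ≤ ν :=
  stmt_19_general hn K hKint hKcone F ν hF hhom hpos hsc
end
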